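/- arXiv:1203.4965 — 12 statements merged into one kernel-verified Lean document; each statement's English description precedes it below -/
import Mathlib

section
/- Gluing identity for trace invariants: let (V₁, W₁, σ) and (V₂, W₂, τ) be closed D-colored graphs, v₁ : V₁ a white vertex and w₂ : W₂ a black vertex. Then for every tensor T : (Fin D → Fin N) → ℂ, Σ_{p : Fin D → Fin N} Tr^{v₁}_σ(T; p) · Tr_{τ,w₂}(T; p) = Tr_{σ ⋆_{(v₁,w₂)} τ}(T). -/
open scoped BigOperators

variable {D N : ℕ}

-- The colored gluing `σ ⋆_{(v₁,w₂)} τ` of two closed `D`-colored graphs at the white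
-- vertex `v₁` of the first and the black vertex `w₂` of the second: the two vertices are
-- deleted and the lines touching them are joined pairwise respecting the colors.
open Classical in
noncomputable def glue {V₁ W₁ V₂ W₂ : Type*}
    (σ : Fin D → V₁ ≃ W₁) (τ : Fin D → V₂ ≃ W₂) (v₁ : V₁) (w₂ : W₂) (i : Fin D) :
    ({v : V₁ // v ≠ v₁} ⊕ V₂) ≃ (W₁ ⊕ {w : W₂ // w ≠ w₂}) where
  toFun :=
    Sum.elim (fun v => Sum.inl (σ i v.1))
      (fun v => if h : τ i v = w₂ then Sum.inl (σ i v₁) else Sum.inr ⟨τ i v, h⟩)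
  invFun :=
    Sum.elim
      (fun w => if h : (σ i).symm w = v₁ then Sum.inr ((τ i).symm w₂)
        else Sum.inl ⟨(σ i).symm w, h⟩)
      (fun w => Sum.inr ((τ i).symm w.1))
  left_inv := by
    rintro (⟨v, hv⟩ | v)
    · simp only [Sum.elim_inl]
      rw [dif_neg (by simpa using hv)]
      simp
    · simp only [Sum.elim_inr]
      split_ifs with h
      · simp only [Sum.elim_inl]
        rw [dif_pos (by simp)]
        simp [← h]
      · simp
  right_inv := by
    rintro (w | ⟨w, hw⟩)
    · simp only [Sum.elim_inl]
      split_ifs with h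
      · simp only [Sum.elim_inr]
        rw [dif_pos (by simp), ← h]
        simp
      · simp
    · simp only [Sum.elim_inr, Equiv.apply_symm_apply]
      rw [dif_neg (by simpa using hw)]

-- The trace invariant `Tr_σ(T)` of the closed `D`-colored graph `σ`.
open Classical in
noncomputable def traceInv {V W : Type*} [Finite V] [Finite W]
    (σ : Fin D → V ≃ W) (T : (Fin D → Fin N) → ℂ) : ℂ :=
  letI := Fintype.ofFinite V
  letI := Fintype.ofFinite W
  ∑ a : V → Fin D → Fin N,
    (∏ v, T (a v)) * ∏ w, (starRingEnd ℂ) (T fun i => a ((σ i).symm w) i)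

-- The trace invariant opened at the white vertex `v₁`: the factor `T (a v₁)` is replaced
-- by the Kronecker delta `∏ i, δ_{a v₁ i, p i}`.
open Classical in
noncomputable def traceInvWhite {V W : Type*} [Finite V] [Finite W]
    (σ : Fin D → V ≃ W) (v₁ : V) (T : (Fin D → Fin N) → ℂ) (p : Fin D → Fin N) : ℂ :=
  letI := Fintype.ofFinite V
  letI := Fintype.ofFinite W
  ∑ a : V → Fin D → Fin N,
    (∏ v, if v = v₁ then ∏ i, (if a v i = p i then (1 : ℂ) else 0) else T (a v)) *
      ∏ w, (starRingEnd ℂ) (T fun i => a ((σ i).symm w) i)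

-- The trace invariant opened at the black vertex `w₁`: the factor
-- `conj (T (fun i => a ((σ i).symm w₁) i))` is replaced by the Kronecker delta.
open Classical in
noncomputable def traceInvBlack {V W : Type*} [Finite V] [Finite W]
    (σ : Fin D → V ≃ W) (w₁ : W) (T : (Fin D → Fin N) → ℂ) (p : Fin D → Fin N) : ℂ :=
  letI := Fintype.ofFinite V
  letI := Fintype.ofFinite W
  ∑ a : V → Fin D → Fin N,
    (∏ v, T (a v)) *
      ∏ w, if w = w₁ then ∏ i, (if a ((σ i).symm w) i = p i then (1 : ℂ) else 0)
        else (starRingEnd ℂ) (T fun i => a ((σ i).symm w) i)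

/-! Expanding the opened invariants as sums over labelings, the delta at `v₁` pins the label of
`v₁` to `p`, and the delta at `w₂` forces `p` to be the label `w₂` reads off its incident lines in
`τ`. Summing over `p` thus identifies the label of `v₁` with the one `w₂` reads, which is exactly
what joining the color-`i` line at `v₁` with the color-`i` line at `w₂` does in the glued graph:
labelings of `σ ⋆ τ` are pairs (labeling of `V₁ ∖ {v₁}`, labeling of `V₂`), and the summands agree
factor by factor. -/

open Finset

theorem prod_boole_apply_eq {ι α M : Type*} [Fintype ι] [CommMonoidWithZero M]
    [DecidableEq α] (a p : ι → α) :
    (∏ i, if a i = p i then (1 : M) else 0) = if a = p then 1 else 0 := by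
  simp only [Fintype.prod_boole, funext_iff]

section Opened

variable {V W : Type*}

def blackLabel (σ : Fin D → V ≃ W) (a : V → Fin D → Fin N) (w : W) : Fin D → Fin N :=
  fun i => a ((σ i).symm w) i

theorem traceInvWhite_eq_sum [Fintype V] [Fintype W] [DecidableEq V]
    (σ : Fin D → V ≃ W) (v₁ : V) (T : (Fin D → Fin N) → ℂ) (p : Fin D → Fin N) :
    traceInvWhite σ v₁ T p = ∑ b : {v // v ≠ v₁} → Fin D → Fin N,
      (∏ v, T (b v)) *
        ∏ w, starRingEnd ℂ (T (blackLabel σ ((Equiv.funSplitAt v₁ _).symm (p, b)) w)) := by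
  have unfolded : traceInvWhite σ v₁ T p = ∑ a : V → Fin D → Fin N,
      (∏ v, if v = v₁ then ∏ i, (if a v i = p i then (1 : ℂ) else 0) else T (a v)) *
        ∏ w, starRingEnd ℂ (T (blackLabel σ a w)) := by
    unfold traceInvWhite blackLabel
    -- the definition uses `Fintype.ofFinite` and classical decidability; `congr!` matches these
    -- subsingleton instances with the ones in context
    congr!
  have hne (v : {v // v ≠ v₁}) : (v : V) ≠ v₁ := v.2
  rw [unfolded, ← (Equiv.funSplitAt v₁ _).symm.sum_comp, Fintype.sum_prod_type]
  simp [Fintype.prod_eq_mul_prod_subtype_ne _ v₁, prod_boole_apply_eq, hne, ite_mul]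

theorem traceInvBlack_eq_sum [Fintype V] [Fintype W] [DecidableEq V] [DecidableEq W]
    (σ : Fin D → V ≃ W) (w₁ : W) (T : (Fin D → Fin N) → ℂ) (p : Fin D → Fin N) :
    traceInvBlack σ w₁ T p = ∑ a : V → Fin D → Fin N,
      if blackLabel σ a w₁ = p then
        (∏ v, T (a v)) * ∏ w : {w // w ≠ w₁}, starRingEnd ℂ (T (blackLabel σ a w))
      else 0 := by
  have unfolded : traceInvBlack σ w₁ T p = ∑ a : V → Fin D → Fin N,
      (∏ v, T (a v)) * ∏ w, if w = w₁ then ∏ i, (if blackLabel σ a w i = p i then (1 : ℂ) else 0)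
        else starRingEnd ℂ (T (blackLabel σ a w)) := by
    unfold traceInvBlack blackLabel
    congr!
  have hne (w : {w // w ≠ w₁}) : (w : W) ≠ w₁ := w.2
  rw [unfolded]
  simp [Fintype.prod_eq_mul_prod_subtype_ne _ w₁, prod_boole_apply_eq, hne, mul_ite, ite_mul]

end Opened

section Glue

variable {V₁ W₁ V₂ W₂ : Type*} (σ : Fin D → V₁ ≃ W₁) (τ : Fin D → V₂ ≃ W₂) (v₁ : V₁) (w₂ : W₂)
  (b : {v // v ≠ v₁} → Fin D → Fin N) (a : V₂ → Fin D → Fin N)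

theorem blackLabel_glue_inr (w : {w // w ≠ w₂}) :
    blackLabel (glue σ τ v₁ w₂) (Sum.elim b a) (Sum.inr w) = blackLabel τ a w :=
  rfl

theorem blackLabel_glue_inl [DecidableEq V₁] (w : W₁) :
    blackLabel (glue σ τ v₁ w₂) (Sum.elim b a) (Sum.inl w) =
      blackLabel σ ((Equiv.funSplitAt v₁ _).symm (blackLabel τ a w₂, b)) w := by
  funext i
  simp only [blackLabel, glue, Equiv.coe_fn_symm_mk, Sum.elim_inl, Equiv.funSplitAt_symm_apply]
  split_ifs <;> rfl

theorem traceInv_glue [Fintype V₁] [Fintype W₁] [Fintype V₂] [Fintype W₂] [DecidableEq V₁]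
    [DecidableEq V₂] [DecidableEq W₂] (T : (Fin D → Fin N) → ℂ) :
    traceInv (glue σ τ v₁ w₂) T = ∑ a : V₂ → Fin D → Fin N, ∑ b : {v // v ≠ v₁} → Fin D → Fin N,
      ((∏ v, T (b v)) * ∏ w,
          starRingEnd ℂ (T (blackLabel σ ((Equiv.funSplitAt v₁ _).symm (blackLabel τ a w₂, b)) w))) *
        ((∏ v, T (a v)) * ∏ w : {w // w ≠ w₂}, starRingEnd ℂ (T (blackLabel τ a w))) := by
  have unfolded : traceInv (glue σ τ v₁ w₂) T = ∑ c : {v // v ≠ v₁} ⊕ V₂ → Fin D → Fin N,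
      (∏ v, T (c v)) * ∏ w, starRingEnd ℂ (T (blackLabel (glue σ τ v₁ w₂) c w)) := by
    unfold traceInv blackLabel
    congr!
  rw [unfolded, ← (Equiv.sumArrowEquivProdArrow _ _ _).symm.sum_comp, Fintype.sum_prod_type,
    sum_comm]
  refine sum_congr rfl fun a _ => sum_congr rfl fun b _ => ?_
  change (∏ v, T (Sum.elim b a v)) * ∏ w, starRingEnd ℂ (T (blackLabel _ (Sum.elim b a) w)) = _
  simp only [Fintype.prod_sum_type, Sum.elim_inl, Sum.elim_inr, blackLabel_glue_inl,
    blackLabel_glue_inr]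
  ring

end Glue

theorem glue_trace_identity_general {D N : ℕ}
    {V₁ W₁ V₂ W₂ : Type*} [Finite V₁] [Finite W₁] [Finite V₂] [Finite W₂]
    (σ : Fin D → V₁ ≃ W₁) (τ : Fin D → V₂ ≃ W₂) (v₁ : V₁) (w₂ : W₂)
    (T : (Fin D → Fin N) → ℂ) :
    ∑ p : Fin D → Fin N, traceInvWhite σ v₁ T p * traceInvBlack τ w₂ T p
      = traceInv (glue σ τ v₁ w₂) T := by
  classical
  have := Fintype.ofFinite V₁
  have := Fintype.ofFinite W₁
  have := Fintype.ofFinite V₂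
  have := Fintype.ofFinite W₂
  simp_rw [traceInv_glue, traceInvBlack_eq_sum, mul_sum, mul_ite, mul_zero]
  rw [sum_comm]
  simp only [sum_ite_eq, mem_univ, if_true, traceInvWhite_eq_sum, sum_mul]

/-- Gluing identity for trace invariants:
`Σ_p Tr^{v₁}_σ(T;p) · Tr_{τ,w₂}(T;p) = Tr_{σ ⋆_{(v₁,w₂)} τ}(T)`. -/
theorem glue_trace_identity {D N : ℕ} (hD : 1 ≤ D) (hN : 1 ≤ N)
    {V₁ W₁ V₂ W₂ : Type*} [Finite V₁] [Finite W₁] [Finite V₂] [Finite W₂]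
    (σ : Fin D → V₁ ≃ W₁) (τ : Fin D → V₂ ≃ W₂) (v₁ : V₁) (w₂ : W₂)
    (T : (Fin D → Fin N) → ℂ) :
    ∑ p : Fin D → Fin N, traceInvWhite σ v₁ T p * traceInvBlack τ w₂ T p
      = traceInv (glue σ τ v₁ w₂) T :=
  glue_trace_identity_general σ τ v₁ w₂ T
end

section
/- Contraction identity for trace invariants: let (V, W, σ) be a closed D-colored graph, v₁ : V a white vertex and w₁ : W a black vertex. Then for every tensor T : (Fin D → Fin N) → ℂ, Σ_{p : Fin D → Fin N} Tr^{v₁}_{σ,w₁}(T; p) = N^{d(v₁,w₁)} · Tr_{σ/(v₁,w₁)}(T), where d(v₁,w₁) = card {i : Fin D | σ i v₁ = w₁} and, by convention, the trace invariant of a graph with empty vertex set equals 1. -/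
open scoped BigOperators

variable {D N : ℕ}

-- The colored contraction `σ/(v₁,w₁)` of a closed `D`-colored graph with respect to the
-- white vertex `v₁` and the black vertex `w₁`: the two vertices are deleted and the lines
-- touching them are reconnected pairwise respecting the colors.
open Classical in
noncomputable def contract {V W : Type*} (σ : Fin D → V ≃ W) (v₁ : V) (w₁ : W) (i : Fin D) :
    {v : V // v ≠ v₁} ≃ {w : W // w ≠ w₁} where
  toFun v :=
    if h : σ i v.1 = w₁ then ⟨σ i v₁, fun hc => v.2 ((σ i).injective (h.trans hc.symm))⟩
    else ⟨σ i v.1, h⟩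
  invFun w :=
    if h : (σ i).symm w.1 = v₁ then
      ⟨(σ i).symm w₁, fun hc => w.2 ((σ i).symm.injective (h.trans hc.symm))⟩
    else ⟨(σ i).symm w.1, h⟩
  left_inv := by
    rintro ⟨x, hx⟩
    dsimp only
    by_cases h : σ i x = w₁
    · rw [dif_pos h, dif_pos (by simp)]
      exact Subtype.ext (by simp [← h])
    · rw [dif_neg h, dif_neg (by simpa using hx)]
      simp
  right_inv := by
    rintro ⟨y, hy⟩
    dsimp only
    by_cases h : (σ i).symm y = v₁
    · rw [dif_pos h, dif_pos (by simp)]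
      exact Subtype.ext (by simp [← h])
    · rw [dif_neg h, dif_neg (by simpa using hy)]
      simp

-- The trace invariant opened both at the white vertex `v₁` and at the black vertex `w₁`.
open Classical in
noncomputable def traceInvOpen {V W : Type*} [Finite V] [Finite W]
    (σ : Fin D → V ≃ W) (v₁ : V) (w₁ : W) (T : (Fin D → Fin N) → ℂ)
    (p : Fin D → Fin N) : ℂ :=
  letI := Fintype.ofFinite V
  letI := Fintype.ofFinite W
  ∑ a : V → Fin D → Fin N,
    (∏ v, if v = v₁ then ∏ i, (if a v i = p i then (1 : ℂ) else 0) else T (a v)) *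
      ∏ w, if w = w₁ then ∏ i, (if a ((σ i).symm w) i = p i then (1 : ℂ) else 0)
        else (starRingEnd ℂ) (T fun i => a ((σ i).symm w) i)

/-! Summing the two Kronecker deltas over `p` glues the open legs: `Σ_p Tr^{v₁}_{σ,w₁}(T; p)` is
the sum, over labellings `a` of the white vertices with `a v₁ i = a ((σ i).symm w₁) i` for every
colour `i`, of the remaining factors. Under this constraint a line of colour `i` from `v₁` to a
black vertex `w ≠ w₁` carries the label of `(σ i).symm w₁`, which is exactly where the contracted
line of colour `i` into `w` starts, so the remaining factors are the summand of
`Tr_{σ/(v₁,w₁)}(T)` at the restriction of `a` to `V ∖ {v₁}`. Given that restriction, the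
constraint fixes `a v₁ i` when `σ i v₁ ≠ w₁` and leaves the other `d(v₁,w₁)` entries free, whence
the factor `N ^ d(v₁,w₁)`. -/

open Finset

theorem card_filter_forall_eq_of_not {ι κ : Type*} [Fintype ι] [DecidableEq ι] [Fintype κ]
    (P : ι → Prop) (β : ∀ i, ¬P i → κ)
    [DecidablePred fun c : ι → κ => ∀ i (h : ¬P i), c i = β i h] :
    #{c : ι → κ | ∀ i (h : ¬P i), c i = β i h} = Fintype.card κ ^ Nat.card {i // P i} := by
  classical
  have hpi : ({c : ι → κ | ∀ i (h : ¬P i), c i = β i h} : Finset (ι → κ))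
      = Fintype.piFinset fun i => if h : P i then univ else {β i h} := by
    ext c
    simp only [mem_filter, mem_univ, true_and, Fintype.mem_piFinset]
    refine forall_congr' fun i => ?_
    by_cases h : P i <;> simp [h]
  rw [hpi, Fintype.card_piFinset, Nat.card_eq_fintype_card, Fintype.card_subtype, ← prod_const,
    prod_filter]
  refine prod_congr rfl fun i _ => ?_
  by_cases h : P i <;> simp [h]

section

variable {V W : Type*}

def blackIndex (σ : Fin D → V ≃ W) (a : V → Fin D → Fin N) (w : W) : Fin D → Fin N :=
  fun i => a ((σ i).symm w) i

def traceWeight [Fintype V] [Fintype W] (σ : Fin D → V ≃ W) (T : (Fin D → Fin N) → ℂ)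
    (a : V → Fin D → Fin N) : ℂ :=
  (∏ v, T (a v)) * ∏ w, starRingEnd ℂ (T (blackIndex σ a w))

theorem traceInv_eq_sum_traceWeight [Fintype V] [Fintype W] [DecidableEq V]
    (σ : Fin D → V ≃ W) (T : (Fin D → Fin N) → ℂ) :
    traceInv σ T = ∑ a, traceWeight σ T a := by
  unfold traceInv traceWeight blackIndex
  congr!

theorem traceInvOpen_eq_sum [Fintype V] [Fintype W] [DecidableEq V] [DecidableEq W]
    (σ : Fin D → V ≃ W) (v₁ : V) (w₁ : W) (T : (Fin D → Fin N) → ℂ) (p : Fin D → Fin N) :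
    traceInvOpen σ v₁ w₁ T p = ∑ a, ((if a v₁ = p then 1 else 0) *
      if blackIndex σ a w₁ = p then 1 else 0) *
        ((∏ v : {v // v ≠ v₁}, T (a v)) *
          ∏ w : {w // w ≠ w₁}, starRingEnd ℂ (T (blackIndex σ a w))) := by
  unfold traceInvOpen blackIndex
  -- `traceInvOpen` sums with `Fintype.ofFinite` and classical decidability; use the given instances
  rw [Subsingleton.elim (Fintype.ofFinite V) ‹_›, Subsingleton.elim (Fintype.ofFinite W) ‹_›,
    Subsingleton.elim (fun a b => Classical.propDecidable (a = b) : DecidableEq V) ‹_›]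
  refine sum_congr rfl fun a _ => ?_
  rw [Fintype.prod_eq_mul_prod_subtype_ne _ v₁, Fintype.prod_eq_mul_prod_subtype_ne _ w₁]
  have hv (v : {v // v ≠ v₁}) : (v : V) ≠ v₁ := v.2
  have hw (w : {w // w ≠ w₁}) : (w : W) ≠ w₁ := w.2
  simp only [if_pos, hv, hw, if_false, Fintype.prod_boole, funext_iff]
  rw [mul_mul_mul_comm]
  congr!

theorem sum_traceInvOpen_eq [Fintype V] [Fintype W] [DecidableEq V] [DecidableEq W]
    (σ : Fin D → V ≃ W) (v₁ : V) (w₁ : W) (T : (Fin D → Fin N) → ℂ) :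
    ∑ p, traceInvOpen σ v₁ w₁ T p = ∑ a, if a v₁ = blackIndex σ a w₁ then
      (∏ v : {v // v ≠ v₁}, T (a v)) * ∏ w : {w // w ≠ w₁}, starRingEnd ℂ (T (blackIndex σ a w))
      else 0 := by
  simp_rw [traceInvOpen_eq_sum]
  rw [sum_comm]
  refine sum_congr rfl fun a _ => ?_
  rw [← sum_mul, sum_boole_mul, if_pos (mem_univ _), ite_mul, one_mul, zero_mul]
  exact if_congr eq_comm rfl rfl

theorem blackIndex_contract {σ : Fin D → V ≃ W} {v₁ : V} {w₁ : W} {a : V → Fin D → Fin N}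
    (h : a v₁ = blackIndex σ a w₁) (w : {w // w ≠ w₁}) :
    blackIndex (contract σ v₁ w₁) (fun v => a v) w = blackIndex σ a w := by
  funext i
  simp only [blackIndex, contract, Equiv.coe_fn_symm_mk]
  split_ifs with hv
  · rw [hv, h]
    rfl
  · rfl

theorem sum_traceInvOpen_eq_sum_traceWeight_contract [Fintype V] [Fintype W] [DecidableEq V]
    [DecidableEq W] (σ : Fin D → V ≃ W) (v₁ : V) (w₁ : W) (T : (Fin D → Fin N) → ℂ) :
    ∑ p, traceInvOpen σ v₁ w₁ T p = ∑ a, if a v₁ = blackIndex σ a w₁ then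
      traceWeight (contract σ v₁ w₁) T (fun v => a v) else 0 := by
  rw [sum_traceInvOpen_eq]
  refine sum_congr rfl fun a _ => ?_
  split_ifs with h
  · simp only [traceWeight, blackIndex_contract h]
  · rfl

theorem funSplitAt_symm_eq_blackIndex_iff [DecidableEq V] (σ : Fin D → V ≃ W) (v₁ : V) (w₁ : W)
    (c : Fin D → Fin N) (b : {v // v ≠ v₁} → Fin D → Fin N) :
    (Equiv.funSplitAt v₁ _).symm (c, b) v₁
        = blackIndex σ ((Equiv.funSplitAt v₁ _).symm (c, b)) w₁ ↔
      ∀ i (h : ¬σ i v₁ = w₁),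
        c i = b ⟨(σ i).symm w₁, fun h' => h ((σ i).symm_apply_eq.mp h').symm⟩ i := by
  simp only [funext_iff, blackIndex, Equiv.funSplitAt_symm_apply, dif_pos]
  refine forall_congr' fun i => ?_
  by_cases h : σ i v₁ = w₁
  · simp [← (σ i).symm_apply_eq.mpr h.symm]
  · have hne : (σ i).symm w₁ ≠ v₁ := fun h' => h ((σ i).symm_apply_eq.mp h').symm
    simp [h, hne]

end

theorem contract_trace_identity_general {D N : ℕ}
    {V W : Type*} [Finite V] [Finite W]
    (σ : Fin D → V ≃ W) (v₁ : V) (w₁ : W) (T : (Fin D → Fin N) → ℂ) :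
    ∑ p : Fin D → Fin N, traceInvOpen σ v₁ w₁ T p
      = (N : ℂ) ^ (Nat.card {i : Fin D // σ i v₁ = w₁}) * traceInv (contract σ v₁ w₁) T := by
  classical
  have := Fintype.ofFinite V
  have := Fintype.ofFinite W
  rw [sum_traceInvOpen_eq_sum_traceWeight_contract, traceInv_eq_sum_traceWeight, mul_sum,
    ← (Equiv.funSplitAt v₁ _).symm.sum_comp, Fintype.sum_prod_type_right]
  refine sum_congr rfl fun b _ => ?_
  have hres (c : Fin D → Fin N) :
      (fun v : {v // v ≠ v₁} => (Equiv.funSplitAt v₁ _).symm (c, b) v) = b := by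
    funext v
    simp [Equiv.funSplitAt_symm_apply, v.2]
  simp_rw [funSplitAt_symm_eq_blackIndex_iff, hres]
  rw [← sum_filter, sum_const, card_filter_forall_eq_of_not, nsmul_eq_mul,
    Fintype.card_fin, Nat.cast_pow]

/-- Contraction identity for trace invariants:
`Σ_p Tr^{v₁}_{σ,w₁}(T;p) = N^{d(v₁,w₁)} · Tr_{σ/(v₁,w₁)}(T)` where `d(v₁,w₁)` is the
number of colors `i` with `σ i v₁ = w₁` (the trace invariant of the empty graph being `1`). -/
theorem contract_trace_identity {D N : ℕ} (hD : 1 ≤ D) (hN : 1 ≤ N)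
    {V W : Type*} [Finite V] [Finite W]
    (σ : Fin D → V ≃ W) (v₁ : V) (w₁ : W) (T : (Fin D → Fin N) → ℂ) :
    ∑ p : Fin D → Fin N, traceInvOpen σ v₁ w₁ T p
      = (N : ℂ) ^ (Nat.card {i : Fin D // σ i v₁ = w₁}) * traceInv (contract σ v₁ w₁) T :=
  contract_trace_identity_general σ v₁ w₁ T
end

section
/- Compatibility of gluing and contraction: let (V₁, W₁, σ) and (V₂, W₂, τ) be closed D-colored graphs, and let v₁ : V₁, w̄₁ : W₁, v₂ : V₂, w̄₂ : W₂. Then the contraction of the glued graph σ ⋆_{(v₁,w̄₂)} τ at the white vertex v₂ (viewed in the V₂ summand) and the black vertex w̄₁ (viewed in the W₁ summand) is isomorphic to the contraction of the glued graph τ ⋆_{(v₂,w̄₁)} σ at the white vertex v₁ and the black vertex w̄₂: [σ ⋆_{(v₁,w̄₂)} τ]/(v₂, w̄₁) ≅ [τ ⋆_{(v₂,w̄₁)} σ]/(v₁, w̄₂). -/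
open scoped BigOperators

variable {D N : ℕ}

/-- Isomorphism of closed `D`-colored graphs: a pair of bijections of the white and of the
black vertices commuting with all the colored bijections. -/
def GraphIso {V W V' W' : Type*} (σ : Fin D → V ≃ W) (σ' : Fin D → V' ≃ W') : Prop :=
  ∃ (f : V ≃ V') (g : W ≃ W'), ∀ i v, σ' i (f v) = g (σ i v)

/-!
Gluing is itself a contraction: `σ ⋆_{(v₁,w̄₂)} τ` is the disjoint union `σ ⊔ τ` contracted
at `(v₁, w̄₂)`. Hence both sides are `σ ⊔ τ` contracted at the two pairs `(v₁, w̄₂)` and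
`(v₂, w̄₁)`, in opposite orders (on the right with the summands swapped, which is an
isomorphism). Contractions at two disjoint pairs commute: in either order, a line leaving a
white vertex is rerouted through the deleted white vertex partnered with each deleted black
vertex it meets, and this description does not depend on the order.
-/

section Iso

variable {V W V' W' V'' W'' : Type*}

def IsGraphIso (σ : Fin D → V ≃ W) (σ' : Fin D → V' ≃ W') (f : V ≃ V') (g : W ≃ W') : Prop :=
  ∀ i v, σ' i (f v) = g (σ i v)

theorem IsGraphIso.graphIso {σ : Fin D → V ≃ W} {σ' : Fin D → V' ≃ W'} {f : V ≃ V'}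
    {g : W ≃ W'} (h : IsGraphIso σ σ' f g) : GraphIso σ σ' :=
  ⟨f, g, h⟩

theorem GraphIso.symm {σ : Fin D → V ≃ W} {σ' : Fin D → V' ≃ W'} (h : GraphIso σ σ') :
    GraphIso σ' σ := by
  obtain ⟨f, g, h⟩ := h
  refine ⟨f.symm, g.symm, fun i v => ?_⟩
  rw [g.eq_symm_apply, ← h, f.apply_symm_apply]

theorem GraphIso.trans {σ : Fin D → V ≃ W} {σ' : Fin D → V' ≃ W'} {σ'' : Fin D → V'' ≃ W''}
    (h : GraphIso σ σ') (h' : GraphIso σ' σ'') : GraphIso σ σ'' := by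
  obtain ⟨f, g, h⟩ := h
  obtain ⟨f', g', h'⟩ := h'
  exact ⟨f.trans f', g.trans g', fun i v => by simp [h, h']⟩

end Iso

section Contract

variable {V W V' W' : Type*}

theorem coe_contract_apply_of_eq (σ : Fin D → V ≃ W) {a : V} {b : W} {i : Fin D}
    {x : {v // v ≠ a}} (hx : σ i x = b) : (contract σ a b i x : W) = σ i a := by
  simp [contract, hx]

theorem coe_contract_apply_of_ne (σ : Fin D → V ≃ W) {a : V} {b : W} {i : Fin D}
    {x : {v // v ≠ a}} (hx : σ i x ≠ b) : (contract σ a b i x : W) = σ i x := by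
  simp [contract, hx]

theorem IsGraphIso.contract {σ : Fin D → V ≃ W} {σ' : Fin D → V' ≃ W'} {f : V ≃ V'}
    {g : W ≃ W'} (h : IsGraphIso σ σ' f g) (a : V) (b : W) :
    IsGraphIso (contract σ a b) (contract σ' (f a) (g b))
      (f.subtypeEquiv fun _ => f.injective.ne_iff.symm)
      (g.subtypeEquiv fun _ => g.injective.ne_iff.symm) := by
  rintro i ⟨x, hx⟩
  have hb : σ' i (f x) = g b ↔ σ i x = b := by rw [h, g.apply_eq_iff_eq]
  apply Subtype.ext
  simp only [Equiv.subtypeEquiv_apply]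
  by_cases hxb : σ i x = b
  · rw [coe_contract_apply_of_eq _ (hb.2 hxb), coe_contract_apply_of_eq _ hxb, h]
  · rw [coe_contract_apply_of_ne _ (mt hb.1 hxb), coe_contract_apply_of_ne _ hxb, h]

end Contract

section DisjUnion

variable {V₁ W₁ V₂ W₂ : Type*}

def disjUnion (σ : Fin D → V₁ ≃ W₁) (τ : Fin D → V₂ ≃ W₂) (i : Fin D) : V₁ ⊕ V₂ ≃ W₁ ⊕ W₂ :=
  (σ i).sumCongr (τ i)

theorem isGraphIso_disjUnion_comm (σ : Fin D → V₁ ≃ W₁) (τ : Fin D → V₂ ≃ W₂) :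
    IsGraphIso (disjUnion σ τ) (disjUnion τ σ) (Equiv.sumComm V₁ V₂) (Equiv.sumComm W₁ W₂) := by
  rintro i (v | v) <;> rfl

end DisjUnion

section Glue

variable {α β : Type*}

def Equiv.sumSubtypeNeInl (a : α) : {x : α ⊕ β // x ≠ Sum.inl a} ≃ {a' // a' ≠ a} ⊕ β :=
  Equiv.subtypeSum.trans <| Equiv.sumCongr
    (Equiv.subtypeEquivRight fun _ => Sum.inl_injective.ne_iff)
    (Equiv.subtypeUnivEquiv fun _ => Sum.inr_ne_inl)

def Equiv.sumSubtypeNeInr (b : β) : {x : α ⊕ β // x ≠ Sum.inr b} ≃ α ⊕ {b' // b' ≠ b} :=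
  Equiv.subtypeSum.trans <| Equiv.sumCongr
    (Equiv.subtypeUnivEquiv fun _ => Sum.inl_ne_inr)
    (Equiv.subtypeEquivRight fun _ => Sum.inr_injective.ne_iff)

variable {V₁ W₁ V₂ W₂ : Type*}

theorem isGraphIso_contract_disjUnion_glue (σ : Fin D → V₁ ≃ W₁) (τ : Fin D → V₂ ≃ W₂)
    (v₁ : V₁) (w₂ : W₂) :
    IsGraphIso (contract (disjUnion σ τ) (Sum.inl v₁) (Sum.inr w₂)) (glue σ τ v₁ w₂)
      (Equiv.sumSubtypeNeInl v₁) (Equiv.sumSubtypeNeInr w₂) := by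
  rintro i ⟨v | v, hv⟩
  · have : contract (disjUnion σ τ) (Sum.inl v₁) (Sum.inr w₂) i ⟨Sum.inl v, hv⟩ =
        ⟨Sum.inl (σ i v), Sum.inl_ne_inr⟩ :=
      Subtype.ext (coe_contract_apply_of_ne _ Sum.inl_ne_inr)
    rw [this]
    rfl
  · by_cases h : τ i v = w₂
    · have : contract (disjUnion σ τ) (Sum.inl v₁) (Sum.inr w₂) i ⟨Sum.inr v, hv⟩ =
          ⟨Sum.inl (σ i v₁), Sum.inl_ne_inr⟩ :=
        Subtype.ext (coe_contract_apply_of_eq _ (congrArg Sum.inr h))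
      rw [this]
      exact dif_pos h
    · have : contract (disjUnion σ τ) (Sum.inl v₁) (Sum.inr w₂) i ⟨Sum.inr v, hv⟩ =
          ⟨Sum.inr (τ i v), fun e => h (Sum.inr_injective e)⟩ :=
        Subtype.ext (coe_contract_apply_of_ne _ fun e => h (Sum.inr_injective e))
      rw [this]
      exact dif_neg h

end Glue

section ContractContract

variable {V W : Type*}

def Equiv.subtypeNeSubtypeNeComm {a a' : V} (h : a ≠ a') :
    {y : {x // x ≠ a} // y ≠ ⟨a', h.symm⟩} ≃ {y : {x // x ≠ a'} // y ≠ ⟨a, h⟩} where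
  toFun y := ⟨⟨y.1.1, fun e => y.2 (Subtype.ext e)⟩, fun e => y.1.2 (congrArg Subtype.val e)⟩
  invFun y := ⟨⟨y.1.1, fun e => y.2 (Subtype.ext e)⟩, fun e => y.1.2 (congrArg Subtype.val e)⟩
  left_inv _ := rfl
  right_inv _ := rfl

open Classical in
theorem coe_coe_contract_contract_apply (σ : Fin D → V ≃ W) {a a' : V} {b b' : W}
    (ha : a' ≠ a) (hb : b' ≠ b) (i : Fin D) (y : {y : {x // x ≠ a} // y ≠ ⟨a', ha⟩}) :
    ((contract (contract σ a b) ⟨a', ha⟩ ⟨b', hb⟩ i y : {w // w ≠ b}) : W) =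
      if σ i y = b then (if σ i a = b' then σ i a' else σ i a)
      else if σ i y = b' then (if σ i a' = b then σ i a else σ i a')
      else σ i y := by
  obtain ⟨⟨x, hxa⟩, hxa'⟩ := y
  have hσx : σ i x ≠ σ i a' := (σ i).injective.ne fun e => hxa' (Subtype.ext e)
  simp only [contract, Equiv.coe_fn_mk]
  split_ifs <;> simp only at * <;> simp_all

theorem isGraphIso_contract_contract_comm (σ : Fin D → V ≃ W) {a a' : V} {b b' : W}
    (ha : a ≠ a') (hb : b ≠ b') :
    IsGraphIso (contract (contract σ a b) ⟨a', ha.symm⟩ ⟨b', hb.symm⟩)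
      (contract (contract σ a' b') ⟨a, ha⟩ ⟨b, hb⟩)
      (Equiv.subtypeNeSubtypeNeComm ha) (Equiv.subtypeNeSubtypeNeComm hb) := by
  intro i y
  apply Subtype.ext
  apply Subtype.ext
  change _ = ((contract (contract σ a b) _ _ i y : {w // w ≠ b}) : W)
  rw [coe_coe_contract_contract_apply, coe_coe_contract_contract_apply]
  classical
  apply ite_ite_comm
  exact fun h h' => hb (h'.symm.trans h)

end ContractContract

/-- Compatibility of gluing and contraction:
`[σ ⋆_{(v₁,w̄₂)} τ]/(v₂,w̄₁) ≅ [τ ⋆_{(v₂,w̄₁)} σ]/(v₁,w̄₂)`. -/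
theorem contract_glue_symm {D : ℕ} {V₁ W₁ V₂ W₂ : Type*}
    (σ : Fin D → V₁ ≃ W₁) (τ : Fin D → V₂ ≃ W₂)
    (v₁ : V₁) (wb₁ : W₁) (v₂ : V₂) (wb₂ : W₂) :
    GraphIso (contract (glue σ τ v₁ wb₂) (Sum.inr v₂) (Sum.inl wb₁))
      (contract (glue τ σ v₂ wb₁) (Sum.inr v₁) (Sum.inl wb₂)) := by
  have h₁ : GraphIso (contract (contract (disjUnion σ τ) (Sum.inl v₁) (Sum.inr wb₂))
      ⟨Sum.inr v₂, Sum.inr_ne_inl⟩ ⟨Sum.inl wb₁, Sum.inl_ne_inr⟩)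
      (contract (glue σ τ v₁ wb₂) (Sum.inr v₂) (Sum.inl wb₁)) :=
    ((isGraphIso_contract_disjUnion_glue σ τ v₁ wb₂).contract _ _).graphIso
  have h₂ := (isGraphIso_contract_contract_comm (disjUnion σ τ)
    (a := Sum.inl v₁) (a' := Sum.inr v₂) (b := Sum.inr wb₂) (b' := Sum.inl wb₁)
    Sum.inl_ne_inr Sum.inr_ne_inl).graphIso
  have h₃ := (((isGraphIso_disjUnion_comm σ τ).contract (Sum.inr v₂) (Sum.inl wb₁)).contract
    ⟨Sum.inl v₁, Sum.inl_ne_inr⟩ ⟨Sum.inr wb₂, Sum.inr_ne_inl⟩).graphIso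
  have h₄ : GraphIso (contract (contract (disjUnion τ σ) (Sum.inl v₂) (Sum.inr wb₁))
      ⟨Sum.inr v₁, Sum.inr_ne_inl⟩ ⟨Sum.inl wb₂, Sum.inl_ne_inr⟩)
      (contract (glue τ σ v₂ wb₁) (Sum.inr v₁) (Sum.inl wb₂)) :=
    ((isGraphIso_contract_disjUnion_glue τ σ v₂ wb₁).contract _ _).graphIso
  exact h₁.symm.trans (h₂.trans (h₃.trans h₄))
end

section
/- Contraction commutes with gluing at distinct vertices: let (V₁, W₁, σ) and (V₂, W₂, τ) be closed D-colored graphs, v, v₁ : V₁ white vertices with v ≠ v₁, w̄₁ : W₁ a black vertex and w₂ : W₂ a black vertex. Then [σ ⋆_{(v,w₂)} τ]/(v₁, w̄₁) is isomorphic to [σ/(v₁,w̄₁)] ⋆_{(v,w₂)} τ, where on the left v₁ and w̄₁ are viewed as vertices of the glued graph, and on the right v is viewed as a white vertex of the contracted graph σ/(v₁,w̄₁). -/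
open scoped BigOperators

variable {D N : ℕ}

/-!
Both sides have white vertices `(V₁ ∖ {v, v₁}) ⊕ V₂` and black vertices
`(W₁ ∖ {w̄₁}) ⊕ (W₂ ∖ {w₂})`, once the two orders of deleting `v` and `v₁` are identified.
On these the color-`i` bijections agree: gluing sends a line of `τ` ending at `w₂` to `σ i v`,
and contraction redirects every line ending at `w̄₁` to `σ i v₁`. Contracting first only replaces
`σ i v` by its redirected value, which is harmless because `v ≠ v₁`.
-/

namespace Equiv

variable {α β : Type*}

def sumNeInlEquiv (a : α) : {x : α ⊕ β // x ≠ .inl a} ≃ {y : α // y ≠ a} ⊕ β :=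
  subtypeSum.trans <| sumCongr (subtypeEquivRight fun _ => Sum.inl_injective.ne_iff)
    (subtypeUnivEquiv fun _ => Sum.inr_ne_inl)

theorem sumMap_val_sumNeInlEquiv (a : α) (x : {x : α ⊕ β // x ≠ .inl a}) :
    Sum.map Subtype.val id (sumNeInlEquiv a x) = x := by
  rcases x with ⟨a | b, h⟩ <;> rfl

def subtypeNeSwap {a b : α} (hab : a ≠ b) :
    {y : {y : α // y ≠ a} // y ≠ ⟨b, hab.symm⟩} ≃ {y : {y : α // y ≠ b} // y ≠ ⟨a, hab⟩} where
  toFun y := ⟨⟨y.1, fun h => y.2 (Subtype.ext h)⟩, fun h => y.1.2 (congrArg Subtype.val h)⟩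
  invFun y := ⟨⟨y.1, fun h => y.2 (Subtype.ext h)⟩, fun h => y.1.2 (congrArg Subtype.val h)⟩
  left_inv _ := rfl
  right_inv _ := rfl

def sumNeInlSwap {a b : α} (hab : a ≠ b) :
    {x : {y : α // y ≠ a} ⊕ β // x ≠ .inl ⟨b, hab.symm⟩} ≃
      {y : {y : α // y ≠ b} // y ≠ ⟨a, hab⟩} ⊕ β :=
  (sumNeInlEquiv _).trans ((subtypeNeSwap hab).sumCongr (Equiv.refl β))

end Equiv

section

variable {V₁ W₁ V₂ W₂ : Type*} (σ : Fin D → V₁ ≃ W₁) (τ : Fin D → V₂ ≃ W₂) (v₁ : V₁) (w₂ : W₂)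
  (i : Fin D)

theorem glue_apply_inr_of_eq {v : V₂} (h : τ i v = w₂) :
    glue σ τ v₁ w₂ i (.inr v) = .inl (σ i v₁) := dif_pos h

theorem glue_apply_inr_of_ne {v : V₂} (h : τ i v ≠ w₂) :
    glue σ τ v₁ w₂ i (.inr v) = .inr ⟨τ i v, h⟩ := dif_neg h

end

section

variable {V W : Type*} (σ : Fin D → V ≃ W) {v₁ : V} {w₁ : W} (i : Fin D) {v : {v // v ≠ v₁}}

theorem coe_contract_apply_of_eq_s4 (h : σ i v = w₁) : (contract σ v₁ w₁ i v : W) = σ i v₁ := by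
  simp [contract, h]

theorem coe_contract_apply_of_ne_s4 (h : σ i v ≠ w₁) : (contract σ v₁ w₁ i v : W) = σ i v := by
  simp [contract, h]

end

theorem sumMap_val_glue_contract_apply {V₁ W₁ V₂ W₂ : Type*} (σ : Fin D → V₁ ≃ W₁)
    (τ : Fin D → V₂ ≃ W₂) {v v₁ : V₁} (hvv : v ≠ v₁) (wb₁ : W₁) (w₂ : W₂) (i : Fin D)
    (x : {x : {u // u ≠ v} ⊕ V₂ // x ≠ .inl ⟨v₁, hvv.symm⟩}) :
    Sum.map Subtype.val id (glue (contract σ v₁ wb₁) τ ⟨v, hvv⟩ w₂ i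
        (Equiv.sumNeInlSwap hvv x)) =
      (contract (glue σ τ v w₂) (.inl ⟨v₁, hvv.symm⟩) (.inl wb₁) i x : W₁ ⊕ {w // w ≠ w₂}) := by
  rcases x with ⟨⟨a, ha⟩ | b, h⟩
  · change Sum.inl (contract σ v₁ wb₁ i ⟨a, _⟩ : W₁) = _
    by_cases hσ : σ i a = wb₁
    · rw [coe_contract_apply_of_eq_s4 σ i hσ, coe_contract_apply_of_eq_s4 _ i (congrArg Sum.inl hσ)]
      rfl
    · rw [coe_contract_apply_of_ne_s4 σ i hσ,
        coe_contract_apply_of_ne_s4 _ i (Sum.inl_injective.ne hσ)]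
      rfl
  · change Sum.map Subtype.val id (glue (contract σ v₁ wb₁) τ ⟨v, hvv⟩ w₂ i (.inr b)) = _
    by_cases hτ : τ i b = w₂
    · have hglue : glue σ τ v w₂ i (.inr b) = .inl (σ i v) := glue_apply_inr_of_eq σ τ v w₂ i hτ
      rw [glue_apply_inr_of_eq _ _ _ _ _ hτ]
      by_cases hσ : σ i v = wb₁
      · rw [Sum.map_inl, coe_contract_apply_of_eq_s4 σ i hσ,
          coe_contract_apply_of_eq_s4 _ i (hglue.trans (congrArg Sum.inl hσ))]
        rfl
      · rw [Sum.map_inl, coe_contract_apply_of_ne_s4 σ i hσ,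
          coe_contract_apply_of_ne_s4 _ i (hglue ▸ Sum.inl_injective.ne hσ), hglue]
    · have hglue := glue_apply_inr_of_ne σ τ v w₂ i hτ
      rw [glue_apply_inr_of_ne _ _ _ _ _ hτ,
        coe_contract_apply_of_ne_s4 _ i (hglue ▸ Sum.inr_ne_inl), hglue]
      rfl

/-- **Statement 5.** Contraction commutes with gluing at distinct vertices:
`[σ ⋆_{(v,w₂)} τ]/(v₁,w̄₁) ≅ [σ/(v₁,w̄₁)] ⋆_{(v,w₂)} τ` for white vertices `v ≠ v₁`. -/
theorem contract_glue_comm {D : ℕ} {V₁ W₁ V₂ W₂ : Type*}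
    (σ : Fin D → V₁ ≃ W₁) (τ : Fin D → V₂ ≃ W₂)
    (v v₁ : V₁) (hvv : v ≠ v₁) (wb₁ : W₁) (w₂ : W₂) :
    GraphIso (contract (glue σ τ v w₂) (Sum.inl ⟨v₁, Ne.symm hvv⟩) (Sum.inl wb₁))
      (glue (contract σ v₁ wb₁) τ ⟨v, hvv⟩ w₂) :=
  ⟨Equiv.sumNeInlSwap hvv, Equiv.sumNeInlEquiv wb₁, fun i x => Sum.map_injective.2
    ⟨Subtype.val_injective, Function.injective_id⟩ <| by
      rw [Equiv.sumMap_val_sumNeInlEquiv]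
      exact sumMap_val_glue_contract_apply σ τ hvv wb₁ w₂ i x⟩
end

section
/- The colored gluing of two connected closed D-colored graphs is connected: if (V₁, W₁, σ) and (V₂, W₂, τ) are connected closed D-colored graphs with V₁ and V₂ nonempty, then for every white vertex v₁ : V₁ and black vertex w₂ : W₂ the glued graph σ ⋆_{(v₁,w₂)} τ is connected. -/
/-!
The crux is that the white vertices `(τ i).symm w₂` of the glued graph, one for each colour
`i`, lie in a single component `C`. Replacing `v₁` by `(τ i).symm w₂` lifts `V₁` into the
glued graph so that colour `i` acts on it as `σ i`; hence the colour-`i` lines from `C` into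
`W₁` are the image under `σ i` of the preimage of `C` under this lift. A component has the
same image under every colour, so these preimages have the same size for all `i`; as they
differ at most at `v₁` and `V₁` is finite, all of them contain `v₁`. After that, every step
`σ i x = σ j y` or `τ i x = τ j y` of a factor lifts to reachability in the glued graph, and
connectedness of the factors concludes.
-/

open scoped BigOperators

variable {D N : ℕ}

/-- The subgroup of the permutations of the white vertices generated by the
`(σ i).trans (σ j).symm`. -/
def bubbleGroup {V W : Type*} (σ : Fin D → V ≃ W) : Subgroup (Equiv.Perm V) :=
  Subgroup.closure {π : Equiv.Perm V | ∃ i j, π = (σ i).trans (σ j).symm}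

/-- A closed `D`-colored graph is connected when `bubbleGroup σ` acts transitively on the
white vertices. -/
def IsConnectedGraph {V W : Type*} (σ : Fin D → V ≃ W) : Prop :=
  ∀ v v' : V, ∃ g ∈ bubbleGroup σ, g v = v'

/-- The setoid on the white vertices whose classes are the connected components of the
graph. -/
def reachSetoid {V W : Type*} (σ : Fin D → V ≃ W) : Setoid V where
  r x y := ∃ g ∈ bubbleGroup σ, g x = y
  iseqv := by
    constructor
    · exact fun x => ⟨1, one_mem _, rfl⟩
    · rintro x y ⟨g, hg, rfl⟩
      exact ⟨g⁻¹, inv_mem hg, by simp⟩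
    · rintro x y z ⟨g, hg, rfl⟩ ⟨g', hg', rfl⟩
      exact ⟨g' * g, mul_mem hg' hg, by simp⟩

section ColoredGraph

variable {V W : Type*} {ρ : Fin D → V ≃ W}

theorem reachSetoid_of_apply_eq {x y : V} (i j : Fin D) (h : ρ i x = ρ j y) :
    reachSetoid ρ x y :=
  ⟨(ρ i).trans (ρ j).symm, Subgroup.subset_closure ⟨i, j, rfl⟩, by simp [h]⟩

theorem reachSetoid_le {r : Setoid V} (h : ∀ i j x y, ρ i x = ρ j y → r x y) :
    reachSetoid ρ ≤ r := by
  suffices H : ∀ g ∈ bubbleGroup ρ, ∀ x, r x (g x) by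
    rintro x _ ⟨g, hg, rfl⟩
    exact H g hg x
  intro g hg
  induction hg using Subgroup.closure_induction with
  | mem _ hπ =>
    obtain ⟨i, j, rfl⟩ := hπ
    exact fun x => h i j _ _ (by simp)
  | one => exact r.refl'
  | mul a b _ _ ha hb => exact fun x => r.trans' (hb x) (ha (b x))
  | inv a _ ha => exact fun x => by simpa using r.symm' (ha (a⁻¹ x))

theorem IsConnectedGraph.rel_of_forall_apply_eq {X : Type*} (hρ : IsConnectedGraph ρ)
    {r : Setoid X} {φ : V → X} (h : ∀ i j x y, ρ i x = ρ j y → r (φ x) (φ y)) (x y : V) :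
    r (φ x) (φ y) :=
  (Setoid.comap_rel φ r x y).1 (reachSetoid_le (r := r.comap φ) h (hρ x y))

theorem image_setOf_reachSetoid_eq (x : V) (i j : Fin D) :
    ρ i '' {y | reachSetoid ρ x y} = ρ j '' {y | reachSetoid ρ x y} := by
  suffices h : ∀ i j, ρ i '' {y | reachSetoid ρ x y} ⊆ ρ j '' {y | reachSetoid ρ x y} from
    (h i j).antisymm (h j i)
  rintro i j _ ⟨y, hy, rfl⟩
  exact ⟨(ρ j).symm (ρ i y),
    (reachSetoid ρ).trans' hy (reachSetoid_of_apply_eq i j (by simp)), by simp⟩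

end ColoredGraph

theorem Set.mem_of_ncard_preimage_eq {α β : Type*} [Finite α] {f g : α → β} {a : α}
    (hfg : ∀ x ≠ a, f x = g x) {C : Set β} (hC : (f ⁻¹' C).ncard = (g ⁻¹' C).ncard)
    (ha : f a ∈ C) : g a ∈ C := by
  by_contra hga
  have : f ⁻¹' C = insert a (g ⁻¹' C) := by
    ext x
    by_cases hx : x = a
    · simp [hx, ha]
    · simp [hx, hfg x hx]
  rw [this, Set.ncard_insert_of_notMem (s := g ⁻¹' C) hga] at hC
  omega

section Glue

variable {V₁ W₁ V₂ W₂ : Type*} {σ : Fin D → V₁ ≃ W₁} {τ : Fin D → V₂ ≃ W₂}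
  {v₁ : V₁} {w₂ : W₂}

open Classical in
noncomputable def glueLift (τ : Fin D → V₂ ≃ W₂) (v₁ : V₁) (w₂ : W₂) (i : Fin D) (v : V₁) :
    {v : V₁ // v ≠ v₁} ⊕ V₂ :=
  if h : v = v₁ then Sum.inr ((τ i).symm w₂) else Sum.inl ⟨v, h⟩

theorem glueLift_of_ne {v : V₁} (hv : v ≠ v₁) (i : Fin D) :
    glueLift τ v₁ w₂ i v = Sum.inl ⟨v, hv⟩ :=
  dif_neg hv

theorem glueLift_self (i : Fin D) : glueLift τ v₁ w₂ i v₁ = Sum.inr ((τ i).symm w₂) :=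
  dif_pos rfl

theorem glue_glueLift (i : Fin D) (v : V₁) :
    glue σ τ v₁ w₂ i (glueLift τ v₁ w₂ i v) = Sum.inl (σ i v) := by
  by_cases hv : v = v₁
  · subst hv
    simp [glueLift_self, glue]
  · simp [glueLift_of_ne hv, glue]

theorem glue_symm_inl (i : Fin D) (w : W₁) :
    (glue σ τ v₁ w₂ i).symm (Sum.inl w) = glueLift τ v₁ w₂ i ((σ i).symm w) := by
  rw [Equiv.symm_apply_eq, glue_glueLift, Equiv.apply_symm_apply]

theorem glue_inr_of_ne (i : Fin D) {v : V₂} (hv : τ i v ≠ w₂) :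
    glue σ τ v₁ w₂ i (Sum.inr v) = Sum.inr ⟨τ i v, hv⟩ := by
  simp [glue, hv]

theorem preimage_inl_image_glue (i : Fin D) (C : Set ({v : V₁ // v ≠ v₁} ⊕ V₂)) :
    Sum.inl ⁻¹' (glue σ τ v₁ w₂ i '' C) = σ i '' (glueLift τ v₁ w₂ i ⁻¹' C) := by
  ext w
  simp [Equiv.image_eq_preimage_symm, glue_symm_inl]

theorem reachSetoid_glue_glueLift_self [Finite V₁] (i j : Fin D) :
    reachSetoid (glue σ τ v₁ w₂) (glueLift τ v₁ w₂ i v₁) (glueLift τ v₁ w₂ j v₁) := by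
  set C := {y | reachSetoid (glue σ τ v₁ w₂) (glueLift τ v₁ w₂ i v₁) y}
  have hcard : (glueLift τ v₁ w₂ i ⁻¹' C).ncard = (glueLift τ v₁ w₂ j ⁻¹' C).ncard := by
    have := congrArg (fun s => (Sum.inl ⁻¹' s).ncard) (image_setOf_reachSetoid_eq
      (ρ := glue σ τ v₁ w₂) (glueLift τ v₁ w₂ i v₁) i j)
    simpa only [preimage_inl_image_glue, Set.ncard_image_of_injective _ (Equiv.injective _)]
      using this
  exact Set.mem_of_ncard_preimage_eq
    (fun v hv => (glueLift_of_ne hv i).trans (glueLift_of_ne hv j).symm) hcard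
    ((reachSetoid _).refl' _)

theorem reachSetoid_glue_glueLift [Finite V₁] (i j : Fin D) (v : V₁) :
    reachSetoid (glue σ τ v₁ w₂) (glueLift τ v₁ w₂ i v) (glueLift τ v₁ w₂ j v) := by
  by_cases hv : v = v₁
  · subst hv
    exact reachSetoid_glue_glueLift_self i j
  · rw [glueLift_of_ne hv i, glueLift_of_ne hv j]

end Glue

theorem glue_connected_general {D : ℕ} (hD : 1 ≤ D) {V₁ W₁ V₂ W₂ : Type*}
    [Finite V₁]
    (σ : Fin D → V₁ ≃ W₁) (τ : Fin D → V₂ ≃ W₂)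
    (hc₁ : IsConnectedGraph σ) (hc₂ : IsConnectedGraph τ)
    (v₁ : V₁) (w₂ : W₂) :
    IsConnectedGraph (glue σ τ v₁ w₂) := by
  set r := reachSetoid (glue σ τ v₁ w₂)
  let i₀ : Fin D := ⟨0, hD⟩
  have lift_rel : ∀ x y, r (glueLift τ v₁ w₂ i₀ x) (glueLift τ v₁ w₂ i₀ y) := by
    refine hc₁.rel_of_forall_apply_eq fun i j x y hxy => ?_
    have hstep : r (glueLift τ v₁ w₂ i x) (glueLift τ v₁ w₂ j y) :=
      reachSetoid_of_apply_eq i j (by rw [glue_glueLift, glue_glueLift, hxy])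
    exact r.trans' (reachSetoid_glue_glueLift i₀ i x)
      (r.trans' hstep (reachSetoid_glue_glueLift j i₀ y))
  have inr_rel : ∀ x y : V₂, r (Sum.inr x) (Sum.inr y) := by
    refine hc₂.rel_of_forall_apply_eq fun i j x y hxy => ?_
    by_cases hx : τ i x = w₂
    · obtain rfl := (τ j).eq_symm_apply.2 (hxy ▸ hx)
      obtain rfl := (τ i).eq_symm_apply.2 hx
      simpa only [glueLift_self] using reachSetoid_glue_glueLift_self (σ := σ) i j
    · exact reachSetoid_of_apply_eq i j
        (by rw [glue_inr_of_ne i hx, glue_inr_of_ne j (hxy ▸ hx)]; simp [hxy])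
  have base : ∀ x, r x (glueLift τ v₁ w₂ i₀ v₁) := by
    rintro (⟨v, hv⟩ | v)
    · simpa only [glueLift_of_ne hv] using lift_rel v v₁
    · simpa only [glueLift_self] using inr_rel v ((τ i₀).symm w₂)
  exact fun x y => r.trans' (base x) (r.symm' (base y))

/-- The colored gluing of two connected closed `D`-colored graphs is
connected. -/
theorem glue_connected {D : ℕ} (hD : 1 ≤ D) {V₁ W₁ V₂ W₂ : Type*}
    [Finite V₁] [Finite W₁] [Finite V₂] [Finite W₂]
    (σ : Fin D → V₁ ≃ W₁) (τ : Fin D → V₂ ≃ W₂)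
    (hne₁ : Nonempty V₁) (hne₂ : Nonempty V₂)
    (hc₁ : IsConnectedGraph σ) (hc₂ : IsConnectedGraph τ)
    (v₁ : V₁) (w₂ : W₂) :
    IsConnectedGraph (glue σ τ v₁ w₂) :=
  glue_connected_general hD σ τ hc₁ hc₂ v₁ w₂
end

section
/- Face count under gluing: let D ≥ 2 and let (V₁, W₁, σ) and (V₂, W₂, τ) be closed D-colored graphs with V₁, V₂ nonempty, v₁ : V₁ a white vertex and w₂ : W₂ a black vertex. Then for every pair of distinct colors i ≠ j, the number of (i,j)-faces of the glued graph satisfies F^{ij}(σ ⋆_{(v₁,w₂)} τ) = F^{ij}(σ) + F^{ij}(τ) − 1. -/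
open scoped BigOperators

variable {D N : ℕ}

/-- The orbit ("same cycle") setoid of a permutation. -/
def sameCycleSetoid {α : Type*} (e : Equiv.Perm α) : Setoid α :=
  ⟨e.SameCycle, ⟨fun x => Equiv.Perm.SameCycle.refl e x, fun h => h.symm, fun h h' => h.trans h'⟩⟩

/-- The number of orbits of a permutation. -/
noncomputable def permOrbitCount {α : Type*} (e : Equiv.Perm α) : ℕ :=
  Nat.card (Quotient (sameCycleSetoid e))

/-- The number of `(i,j)`-faces of a closed `D`-colored graph: the number of orbits on the
white vertices of the permutation `(σ i).trans (σ j).symm`. -/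
noncomputable def faceCount {V W : Type*} (σ : Fin D → V ≃ W) (i j : Fin D) : ℕ :=
  permOrbitCount ((σ i).trans (σ j).symm)

/-- The total number of faces `F(σ) = Σ_{i<j} F^{ij}(σ)`. -/
noncomputable def totalFaces {V W : Type*} (σ : Fin D → V ≃ W) : ℕ :=
  ∑ p ∈ Finset.univ.filter (fun p : Fin D × Fin D => p.1 < p.2), faceCount σ p.1 p.2

/-!
The face permutation `(σ i).trans (σ j).symm` of the glued graph is a splice of the face
permutations `p` of `σ` and `q` of `τ` at `v₁` and `b = (τ i).symm w₂`: it agrees with them, except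
that the `p`-cycle of `v₁` and the `q`-cycle of `b` are joined into one cycle from which `v₁` is cut
out. So its cycles are those of `p` and `q` with these two identified, and there is one fewer.
-/

open Equiv Equiv.Perm

theorem Equiv.Perm.SameCycle.of_forall_rel_apply {α : Type*} {f : Perm α} {r : α → α → Prop}
    (hr : Equivalence r) (hf : ∀ x, r x (f x)) {x y : α} (hxy : f.SameCycle x y) : r x y := by
  obtain ⟨n, rfl⟩ := hxy
  induction n using Int.induction_on with
  | zero => exact hr.refl x
  | succ n ih =>
    refine hr.trans ih ?_
    rw [add_comm, zpow_add, zpow_one, mul_apply]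
    exact hf _
  | pred n ih =>
    refine hr.trans ih (hr.symm ?_)
    rw [sub_eq_neg_add, zpow_add, zpow_neg_one, mul_apply]
    simpa using hf ((f⁻¹) ((f ^ (-(n : ℤ))) x))

theorem Equiv.Perm.SameCycle.sameCycle_map {α γ : Type*} {f : Perm α} {g : Perm γ} {φ : α → γ}
    (hφ : ∀ x, g.SameCycle (φ x) (φ (f x))) {x y : α} (hxy : f.SameCycle x y) :
    g.SameCycle (φ x) (φ y) :=
  hxy.of_forall_rel_apply (r := fun x y => g.SameCycle (φ x) (φ y))
    ⟨fun _ => SameCycle.refl _ _, SameCycle.symm, SameCycle.trans⟩ hφ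

section Splice

open scoped Classical

variable {α β : Type*}

noncomputable def replacePoint (a : α) (b' : β) (x : α) : {x // x ≠ a} ⊕ β :=
  if h : x = a then Sum.inr b' else Sum.inl ⟨x, h⟩

@[simp]
theorem replacePoint_self (a : α) (b' : β) : replacePoint a b' a = Sum.inr b' :=
  dif_pos rfl

theorem replacePoint_of_ne {a x : α} (b' : β) (hx : x ≠ a) :
    replacePoint a b' x = Sum.inl ⟨x, hx⟩ :=
  dif_neg hx

/-- The `p`-cycle of `a` and the `q`-cycle of `b` are merged into one `g`-cycle, from which `a` is
removed. -/
structure IsSplice (p : Perm α) (q : Perm β) (a : α) (b : β)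
    (g : Perm ({x // x ≠ a} ⊕ β)) : Prop where
  apply_inl : ∀ x : {x // x ≠ a}, g (Sum.inl x) = replacePoint a (q b) (p x)
  apply_inr_of_ne : ∀ y, y ≠ b → g (Sum.inr y) = Sum.inr (q y)
  apply_inr_self : g (Sum.inr b) = replacePoint a (q b) (p a)

theorem mk_sameCycleSetoid_eq {γ : Type*} {e : Perm γ} {x y : γ} :
    Quotient.mk (sameCycleSetoid e) x = Quotient.mk _ y ↔ e.SameCycle x y :=
  Quotient.eq

@[simp]
theorem mk_sameCycleSetoid_apply {γ : Type*} (e : Perm γ) (x : γ) :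
    Quotient.mk (sameCycleSetoid e) (e x) = Quotient.mk _ x :=
  mk_sameCycleSetoid_eq.mpr (sameCycle_apply_left.mpr (SameCycle.refl e x))

/-- Labels the cycles of any splice of `p` and `q` at `a` and `b`. -/
noncomputable def mergedOrbit (p : Perm α) (q : Perm β) (a : α) (b : β) :
    {x // x ≠ a} ⊕ β → Quotient (sameCycleSetoid p) ⊕ Quotient (sameCycleSetoid q)
  | Sum.inl x =>
    if p.SameCycle x a then Sum.inr (Quotient.mk _ b) else Sum.inl (Quotient.mk _ x.1)
  | Sum.inr y => Sum.inr (Quotient.mk _ y)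

noncomputable def mergedOrbitRep {p : Perm α} {q : Perm β} (a : α) (b : β) :
    Quotient (sameCycleSetoid p) ⊕ Quotient (sameCycleSetoid q) → {x // x ≠ a} ⊕ β
  | Sum.inl X => replacePoint a b X.out
  | Sum.inr Y => Sum.inr Y.out

theorem mergedOrbit_replacePoint (p : Perm α) (q : Perm β) (a : α) (b : β) (x : α) :
    mergedOrbit p q a b (replacePoint a (q b) x)
      = if p.SameCycle x a then Sum.inr (Quotient.mk _ b) else Sum.inl (Quotient.mk _ x) := by
  by_cases hx : x = a
  · subst hx
    rw [replacePoint_self, if_pos (SameCycle.refl p x)]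
    exact congrArg Sum.inr (mk_sameCycleSetoid_apply q b)
  · rw [replacePoint_of_ne _ hx]
    rfl

theorem range_mergedOrbit (p : Perm α) (q : Perm β) (a : α) (b : β) :
    Set.range (mergedOrbit p q a b) = {Sum.inl (Quotient.mk _ a)}ᶜ := by
  ext d
  simp only [Set.mem_range, Set.mem_compl_singleton_iff]
  constructor
  · rintro ⟨x | y, rfl⟩
    · simp only [mergedOrbit]
      split_ifs with hxa
      · exact Sum.inr_ne_inl
      · exact fun h => hxa (mk_sameCycleSetoid_eq.mp (Sum.inl_injective h))
    · exact Sum.inr_ne_inl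
  · rintro hd
    rcases d with X | Y
    · induction X using Quotient.inductionOn with
      | h x =>
        have hxa : ¬p.SameCycle x a := fun h => hd (congrArg Sum.inl (mk_sameCycleSetoid_eq.mpr h))
        refine ⟨Sum.inl ⟨x, fun h => hxa (h ▸ SameCycle.refl p x)⟩, ?_⟩
        simp only [mergedOrbit, if_neg hxa]
    · induction Y using Quotient.inductionOn with
      | h y => exact ⟨Sum.inr y, rfl⟩

namespace IsSplice

variable {p : Perm α} {q : Perm β} {a : α} {b : β}
  {g : Perm ({x // x ≠ a} ⊕ β)} (hg : IsSplice p q a b g)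
include hg

theorem apply_replacePoint (x : α) : g (replacePoint a b x) = replacePoint a (q b) (p x) := by
  by_cases hx : x = a
  · subst hx; rw [replacePoint_self, hg.apply_inr_self]
  · rw [replacePoint_of_ne b hx, hg.apply_inl]

theorem sameCycle_replacePoint_of_pow_eq (n : ℕ) (x : α) (hn : (p ^ n) x = a) :
    g.SameCycle (replacePoint a (q b) x) (Sum.inr (q b)) := by
  induction n generalizing x with
  | zero => simp only [pow_zero, one_apply] at hn; subst hn; rw [replacePoint_self]
  | succ n ih =>
    by_cases hx : x = a
    · subst hx; rw [replacePoint_self]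
    · rw [replacePoint_of_ne _ hx, ← sameCycle_apply_left, hg.apply_inl]
      exact ih (p x) (by rwa [← mul_apply, ← pow_succ])

-- From `b`, `g` runs along the `p`-cycle of `a` up to the arrow into `a`, which leads to `q b`.
theorem sameCycle_inr_self_apply [Finite α] : g.SameCycle (Sum.inr b) (Sum.inr (q b)) := by
  obtain ⟨n, -, hn⟩ := (sameCycle_apply_left.mpr (SameCycle.refl p a)).exists_pow_eq'
  rw [← sameCycle_apply_left, hg.apply_inr_self]
  exact hg.sameCycle_replacePoint_of_pow_eq n (p a) hn

theorem sameCycle_inr [Finite α] {y y' : β} (h : q.SameCycle y y') :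
    g.SameCycle (Sum.inr y) (Sum.inr y') := by
  refine h.sameCycle_map fun y => ?_
  by_cases hy : y = b
  · subst hy; exact hg.sameCycle_inr_self_apply
  · rw [← sameCycle_apply_left, hg.apply_inr_of_ne y hy]

theorem sameCycle_replacePoint [Finite α] {x x' : α} (h : p.SameCycle x x') :
    g.SameCycle (replacePoint a b x) (replacePoint a b x') := by
  refine h.sameCycle_map fun x => ?_
  rw [← sameCycle_apply_left, hg.apply_replacePoint]
  by_cases hx : p x = a
  · rw [hx, replacePoint_self, replacePoint_self]
    exact hg.sameCycle_inr_self_apply.symm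
  · rw [replacePoint_of_ne _ hx, replacePoint_of_ne _ hx]

theorem mergedOrbit_apply (u : {x // x ≠ a} ⊕ β) :
    mergedOrbit p q a b (g u) = mergedOrbit p q a b u := by
  rcases u with x | y
  · rw [hg.apply_inl, mergedOrbit_replacePoint]
    simp only [mergedOrbit, sameCycle_apply_left, mk_sameCycleSetoid_apply]
  · by_cases hy : y = b
    · subst hy
      rw [hg.apply_inr_self, mergedOrbit_replacePoint,
        if_pos (sameCycle_apply_left.mpr (.refl p a))]
      rfl
    · rw [hg.apply_inr_of_ne y hy]
      simp only [mergedOrbit, mk_sameCycleSetoid_apply]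

theorem sameCycle_mergedOrbitRep [Finite α] (u : {x // x ≠ a} ⊕ β) :
    g.SameCycle u (mergedOrbitRep a b (mergedOrbit p q a b u)) := by
  rcases u with ⟨x, hx⟩ | y
  · by_cases hxa : p.SameCycle x a
    · simp only [mergedOrbit, if_pos hxa, mergedOrbitRep]
      have := hg.sameCycle_replacePoint hxa
      rw [replacePoint_of_ne b hx, replacePoint_self] at this
      exact this.trans (hg.sameCycle_inr (Quotient.mk_out (s := sameCycleSetoid q) b).symm)
    · simp only [mergedOrbit, if_neg hxa, mergedOrbitRep]
      have := hg.sameCycle_replacePoint (Quotient.mk_out (s := sameCycleSetoid p) x).symm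
      rwa [replacePoint_of_ne b hx] at this
  · exact hg.sameCycle_inr (Quotient.mk_out (s := sameCycleSetoid q) y).symm

theorem sameCycle_iff [Finite α] {u w : {x // x ≠ a} ⊕ β} :
    g.SameCycle u w ↔ mergedOrbit p q a b u = mergedOrbit p q a b w := by
  refine ⟨fun h => h.of_forall_rel_apply (Setoid.ker _).iseqv
    fun u => (hg.mergedOrbit_apply u).symm, fun h => ?_⟩
  exact (hg.sameCycle_mergedOrbitRep u).trans (h ▸ hg.sameCycle_mergedOrbitRep w).symm

theorem card_orbits [Finite α] [Finite β] :
    Nat.card (Quotient (sameCycleSetoid g))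
      = Nat.card (Quotient (sameCycleSetoid p)) + Nat.card (Quotient (sameCycleSetoid q)) - 1 := by
  rw [Nat.card_congr ((Quotient.congrRight fun _ _ => hg.sameCycle_iff).trans
      (Setoid.quotientKerEquivRange _)), range_mergedOrbit, Nat.card_coe_set_eq, Set.ncard_compl,
    Set.ncard_singleton, Nat.card_sum]

end IsSplice

end Splice

theorem glue_isSplice {D : ℕ} {V₁ W₁ V₂ W₂ : Type*} (σ : Fin D → V₁ ≃ W₁)
    (τ : Fin D → V₂ ≃ W₂) (v₁ : V₁) (w₂ : W₂) (i j : Fin D) :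
    IsSplice ((σ i).trans (σ j).symm) ((τ i).trans (τ j).symm) v₁ ((τ i).symm w₂)
      ((glue σ τ v₁ w₂ i).trans (glue σ τ v₁ w₂ j).symm) where
  apply_inl x := by
    by_cases h : (σ j).symm (σ i x) = v₁ <;> simp [glue, replacePoint, h]
  apply_inr_of_ne y hy := by
    have : τ i y ≠ w₂ := by rintro rfl; simp at hy
    simp [glue, this]
  apply_inr_self := by
    by_cases h : (σ j).symm (σ i v₁) = v₁ <;> simp [glue, replacePoint, h]

theorem glue_faceCount_general {D : ℕ} {V₁ W₁ V₂ W₂ : Type*}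
    [Fintype V₁] [Fintype V₂]
    (σ : Fin D → V₁ ≃ W₁) (τ : Fin D → V₂ ≃ W₂) (v₁ : V₁) (w₂ : W₂)
    {i j : Fin D} :
    faceCount (glue σ τ v₁ w₂) i j = faceCount σ i j + faceCount τ i j - 1 :=
  (glue_isSplice σ τ v₁ w₂ i j).card_orbits

/-- Face count under gluing:
`F^{ij}(σ ⋆_{(v₁,w₂)} τ) = F^{ij}(σ) + F^{ij}(τ) − 1` for distinct colors `i ≠ j`. -/
theorem glue_faceCount {D : ℕ} (hD : 2 ≤ D) {V₁ W₁ V₂ W₂ : Type*}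
    [Fintype V₁] [Fintype W₁] [Fintype V₂] [Fintype W₂]
    (hne₁ : Nonempty V₁) (hne₂ : Nonempty V₂)
    (σ : Fin D → V₁ ≃ W₁) (τ : Fin D → V₂ ≃ W₂) (v₁ : V₁) (w₂ : W₂)
    {i j : Fin D} (hij : i ≠ j) :
    faceCount (glue σ τ v₁ w₂) i j = faceCount σ i j + faceCount τ i j - 1 :=
  glue_faceCount_general σ τ v₁ w₂
end

section
/- Additivity of the degree under gluing: let D ≥ 2 and let (V₁, W₁, σ) and (V₂, W₂, τ) be closed D-colored graphs with V₁, V₂ nonempty, v₁ : V₁ a white vertex and w₂ : W₂ a black vertex. Then ω(σ ⋆_{(v₁,w₂)} τ) = ω(σ) + ω(τ). -/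
open scoped BigOperators

variable {D N : ℕ}

/-- The degree `ω(σ) = ((D-2)!/2) ((D-1)(D-2) k/2 + (D-1) - F(σ))` of a closed
`D`-colored graph with `k` white (and `k` black) vertices. -/
noncomputable def graphDegree {V W : Type*} (σ : Fin D → V ≃ W) : ℚ :=
  (Nat.factorial (D - 2) : ℚ) / 2 *
    (((D : ℚ) - 1) * ((D : ℚ) - 2) * (Nat.card V) / 2 + ((D : ℚ) - 1) - totalFaces σ)

/-! For colours `i`, `j` let `π₁`, `π₂` be the face permutations of `σ` and `τ` and
`b = (τ i)⁻¹ w₂`. The face permutation of the glued graph is obtained from `π₁ ⊕ π₂` by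
merging the cycles of `v₁` and `b` (right multiplication by the transposition of `v₁` and `b`,
which loses exactly one cycle) and then deleting `v₁` from the merged cycle (which loses none).
So each of the `D(D-1)/2` face counts drops by one, the number of white vertices drops by one,
and these losses exactly make up for the constant `D - 1` appearing twice in `ω(σ) + ω(τ)`. -/

open Equiv Equiv.Perm Function

theorem natCard_subtype_ne_add_one {α : Type*} [Finite α] (a : α) :
    Nat.card {x : α // x ≠ a} + 1 = Nat.card α := by
  classical
  rw [← Finite.card_option, Nat.card_congr (optionSubtypeNe a)]

@[simp]
theorem sameCycleSetoid_mk_eq_iff {α : Type*} {e : Perm α} {x y : α} :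
    Quotient.mk (sameCycleSetoid e) x = Quotient.mk (sameCycleSetoid e) y ↔ e.SameCycle x y :=
  Quotient.eq

theorem Equiv.Perm.SameCycle.eq_of_apply_invariant {α ε : Type*} [Finite α] {g : Perm α}
    {Φ : α → ε} (hΦ : ∀ z, Φ (g z) = Φ z) {z z' : α} (h : g.SameCycle z z') : Φ z = Φ z' := by
  obtain ⟨n, rfl⟩ := h.exists_nat_pow_eq
  clear h
  induction n with
  | zero => rfl
  | succ n ih => rw [ih, pow_succ', mul_apply, hΦ]

theorem permOrbitCount_eq_natCard {α ε : Type*} [Finite α] (g : Perm α) (Φ : α → ε)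
    (hΦ : ∀ z, Φ (g z) = Φ z) (hsc : ∀ z z', Φ z = Φ z' → g.SameCycle z z')
    (hsurj : Surjective Φ) : permOrbitCount g = Nat.card ε := by
  refine Nat.card_eq_of_bijective
    (Quotient.lift (s := sameCycleSetoid g) Φ fun _ _ h => h.eq_of_apply_invariant hΦ) ⟨?_, ?_⟩
  · rintro ⟨z⟩ ⟨z'⟩ h
    exact Quotient.sound (hsc z z' h)
  · intro c
    obtain ⟨z, rfl⟩ := hsurj c
    exact ⟨Quotient.mk _ z, rfl⟩

theorem Equiv.Perm.sameCycle_of_eqOn_cycle {α : Type*} [Finite α] {π k : Perm α} {u v : α}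
    (hk : ∀ z, π.SameCycle z v → z ≠ v → k z = π z) (h : π.SameCycle u v) :
    k.SameCycle u v := by
  obtain ⟨n, hn⟩ := h.exists_nat_pow_eq
  induction n generalizing u with
  | zero => rw [← hn]; rfl
  | succ n ih =>
    by_cases huv : u = v
    · rw [huv]
    rw [pow_succ, mul_apply] at hn
    have hku : k u = π u := hk u h huv
    exact (SameCycle.rfl.trans ⟨1, by simp [hku]⟩).trans
      (ih (sameCycle_apply_left.2 h) hn)

theorem permOrbitCount_sumCongr {α β : Type*} [Finite α] [Finite β] (π₁ : Perm α)
    (π₂ : Perm β) :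
    permOrbitCount (Perm.sumCongr π₁ π₂) = permOrbitCount π₁ + permOrbitCount π₂ := by
  refine (permOrbitCount_eq_natCard _ (Sum.map (Quotient.mk _) (Quotient.mk _)) ?_ ?_
    (Sum.map_surjective.2 ⟨Quotient.mk_surjective, Quotient.mk_surjective⟩)).trans Nat.card_sum
  · rintro (x | y) <;> simp [sameCycle_apply_left, SameCycle.rfl]
  · have hpow (i : ℤ) : Perm.sumCongr π₁ π₂ ^ i = Perm.sumCongr (π₁ ^ i) (π₂ ^ i) :=
      (map_zpow (sumCongrHom α β) (π₁, π₂) i).symm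
    rintro (x | y) (x' | y') h <;> simp only [Sum.map_inl, Sum.map_inr, Sum.inl.injEq,
      Sum.inr.injEq, reduceCtorEq, sameCycleSetoid_mk_eq_iff] at h
    · obtain ⟨i, rfl⟩ := h
      exact ⟨i, by simp [hpow]⟩
    · obtain ⟨i, rfl⟩ := h
      exact ⟨i, by simp [hpow]⟩

theorem permOrbitCount_mul_swap_add_one {α : Type*} [Finite α] [DecidableEq α] {π : Perm α}
    {x y : α} (hxy : ¬π.SameCycle x y) :
    permOrbitCount (π * swap x y) + 1 = permOrbitCount π := by
  classical
  set k := π * swap x y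
  have hk (z : α) (hzx : z ≠ x) (hzy : z ≠ y) : k z = π z := by
    simp [k, swap_apply_of_ne_of_ne hzx hzy]
  have hkx : k x = π y := by simp [k]
  have hky : k y = π x := by simp [k]
  have to_x (u : α) (hu : π.SameCycle u x) : k.SameCycle u x :=
    sameCycle_of_eqOn_cycle (fun z hz hzx => hk z hzx (by rintro rfl; exact hxy hz.symm)) hu
  have to_y (u : α) (hu : π.SameCycle u y) : k.SameCycle u y :=
    sameCycle_of_eqOn_cycle (fun z hz hzy => hk z (by rintro rfl; exact hxy hz) hzy) hu
  have hxy_k : k.SameCycle x y :=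
    (sameCycle_apply_left.1 (hky ▸ to_x (π x) (sameCycle_apply_left.2 SameCycle.rfl))).symm
  -- `Φ u` is the `π`-cycle of `u`, except that the cycle of `y` is merged into that of `x`.
  let Φ (u : α) : {c : Quotient (sameCycleSetoid π) // c ≠ Quotient.mk _ y} :=
    ⟨if π.SameCycle u y then Quotient.mk _ x else Quotient.mk _ u, by
      split_ifs with hu
      · simpa using hxy
      · simpa using hu⟩
  rw [permOrbitCount_eq_natCard k Φ ?_ ?_ ?_]
  · exact natCard_subtype_ne_add_one _
  · have hmk (u : α) : Quotient.mk (sameCycleSetoid π) (π u) = Quotient.mk _ u :=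
      Quotient.sound (sameCycle_apply_left.2 SameCycle.rfl)
    intro u
    apply Subtype.ext
    by_cases hux : u = x
    · simp [Φ, hux, hkx, hxy, sameCycle_apply_left, SameCycle.rfl]
    by_cases huy : u = y
    · simp [Φ, huy, hky, hmk, sameCycle_apply_left, SameCycle.rfl, hxy]
    · simp [Φ, hk u hux huy, hmk, sameCycle_apply_left]
  · intro u v h
    simp only [Φ, Subtype.mk.injEq] at h
    split_ifs at h with hu hv hv
    · exact (to_y u hu).trans (to_y v hv).symm
    · exact (to_y u hu).trans (hxy_k.symm.trans (to_x v (by simpa using h.symm)).symm)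
    · exact ((to_x u (by simpa using h)).trans hxy_k).trans (to_y v hv).symm
    · replace h : π.SameCycle u v := by simpa using h
      by_cases hux : π.SameCycle u x
      · exact (to_x u hux).trans (to_x v (h.symm.trans hux)).symm
      · refine sameCycle_of_eqOn_cycle (fun z hz _ => hk z ?_ ?_) h
        · rintro rfl; exact hux (h.trans hz.symm)
        · rintro rfl; exact hv hz.symm
  · rintro ⟨c, hc⟩
    induction c using Quotient.inductionOn with | h u => ?_
    have hu : ¬π.SameCycle u y := by simpa using hc
    exact ⟨u, by simp [Φ, hu]⟩

theorem permOrbitCount_eq_of_skip {γ δ : Type*} [Finite γ] [DecidableEq γ] {k : Perm γ} {c : γ}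
    (hc : k c ≠ c) (g : Perm δ) (ι : δ → γ) (hι : Injective ι) (hrange : Set.range ι = {c}ᶜ)
    (hg : ∀ z, ι (g z) = if k (ι z) = c then k c else k (ι z)) :
    permOrbitCount g = permOrbitCount k := by
  have : Finite δ := Finite.of_injective ι hι
  have hιc (z : δ) : ι z ≠ c := by
    simpa [hrange] using Set.mem_range_self (f := ι) z
  refine permOrbitCount_eq_natCard g (fun z => Quotient.mk (sameCycleSetoid k) (ι z)) ?_ ?_ ?_
  · intro z
    refine sameCycleSetoid_mk_eq_iff.2 (SameCycle.symm ?_)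
    have hstep : k.SameCycle (ι z) (k (ι z)) := sameCycle_apply_right.2 SameCycle.rfl
    rw [hg]
    split_ifs with h
    · exact sameCycle_apply_right.2 (h ▸ hstep)
    · exact hstep
  · intro z z' h
    obtain ⟨n, hn⟩ := (sameCycleSetoid_mk_eq_iff.1 h).exists_nat_pow_eq
    clear h
    induction n using Nat.strong_induction_on generalizing z with | _ n ih => ?_
    rcases n with _ | n
    · rw [hι hn]
    by_cases hkz : k (ι z) = c
    · rcases n with _ | n
      · exact absurd (hkz.symm.trans hn) (hιc z').symm
      · have hgz : ι (g z) = (k ^ 2) (ι z) := by rw [hg, if_pos hkz, ← hkz]; rfl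
        refine sameCycle_apply_left.1 (ih n (by omega) (g z) ?_)
        rwa [hgz, ← mul_apply, ← pow_add]
    · have hgz : ι (g z) = k (ι z) := by rw [hg, if_neg hkz]
      refine sameCycle_apply_left.1 (ih n (by omega) (g z) ?_)
      rwa [hgz, ← mul_apply, ← pow_succ]
  · rintro ⟨w⟩
    by_cases hw : w = c
    · obtain ⟨z, hz⟩ : k c ∈ Set.range ι := by simpa [hrange] using hc
      exact ⟨z, Quotient.sound (hz ▸ hw ▸ sameCycle_apply_left.2 SameCycle.rfl)⟩
    · obtain ⟨z, hz⟩ : w ∈ Set.range ι := by simpa [hrange] using hw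
      exact ⟨z, congrArg _ hz⟩

section glue

variable {V₁ W₁ V₂ W₂ : Type*} (σ : Fin D → V₁ ≃ W₁) (τ : Fin D → V₂ ≃ W₂) (v₁ : V₁) (w₂ : W₂)
  (i : Fin D)

@[simp]
theorem glue_apply_inl (v : {v : V₁ // v ≠ v₁}) :
    glue σ τ v₁ w₂ i (Sum.inl v) = Sum.inl (σ i v) := rfl

open Classical in
@[simp]
theorem glue_apply_inr (v : V₂) :
    glue σ τ v₁ w₂ i (Sum.inr v) =
      if h : τ i v = w₂ then Sum.inl (σ i v₁) else Sum.inr ⟨τ i v, h⟩ := rfl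

open Classical in
@[simp]
theorem glue_symm_apply_inl (w : W₁) :
    (glue σ τ v₁ w₂ i).symm (Sum.inl w) =
      if h : (σ i).symm w = v₁ then Sum.inr ((τ i).symm w₂) else Sum.inl ⟨(σ i).symm w, h⟩ :=
  rfl

@[simp]
theorem glue_symm_apply_inr (w : {w : W₂ // w ≠ w₂}) :
    (glue σ τ v₁ w₂ i).symm (Sum.inr w) = Sum.inr ((τ i).symm w) := rfl

end glue

theorem faceCount_glue_add_one {V₁ W₁ V₂ W₂ : Type*} [Finite V₁] [Finite V₂]
    (σ : Fin D → V₁ ≃ W₁) (τ : Fin D → V₂ ≃ W₂) (v₁ : V₁) (w₂ : W₂) (i j : Fin D) :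
    faceCount (glue σ τ v₁ w₂) i j + 1 = faceCount σ i j + faceCount τ i j := by
  classical
  set π₁ := (σ i).trans (σ j).symm
  set π₂ := (τ i).trans (τ j).symm
  set b := (τ i).symm w₂
  have hab : ¬(Perm.sumCongr π₁ π₂).SameCycle (Sum.inl v₁) (Sum.inr b) := fun h =>
    Bool.false_ne_true (h.eq_of_apply_invariant (Φ := Sum.isRight) (by rintro (_ | _) <;> rfl))
  rw [faceCount, faceCount, faceCount, ← permOrbitCount_sumCongr,
    ← permOrbitCount_mul_swap_add_one hab]
  congr 1
  set k := Perm.sumCongr π₁ π₂ * swap (Sum.inl v₁) (Sum.inr b)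
  have hk_inl (v : V₁) (hv : v ≠ v₁) : k (Sum.inl v) = Sum.inl (π₁ v) := by
    simp [k, swap_apply_of_ne_of_ne (Sum.inl_injective.ne hv) Sum.inl_ne_inr]
  have hk_inr (v : V₂) (hv : v ≠ b) : k (Sum.inr v) = Sum.inr (π₂ v) := by
    simp [k, swap_apply_of_ne_of_ne Sum.inr_ne_inl (Sum.inr_injective.ne hv)]
  have hkc : k (Sum.inl v₁) = Sum.inr (π₂ b) := by simp [k]
  have hkb : k (Sum.inr b) = Sum.inl (π₁ v₁) := by simp [k]
  refine permOrbitCount_eq_of_skip (c := Sum.inl v₁) (by simp [hkc]) _ (Sum.map Subtype.val id)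
    (Sum.map_injective.2 ⟨Subtype.val_injective, injective_id⟩) ?_ ?_
  · ext (v | v) <;> simp
  · rintro (⟨v, hv⟩ | v)
    · by_cases h : π₁ v = v₁ <;> simp_all [π₁, π₂, b]
    · by_cases hvb : v = b
      · rw [Sum.map_inr, id, hvb, hkb]
        by_cases h : π₁ v₁ = v₁ <;> simp_all [π₁, π₂, b]
      · have hv : τ i v ≠ w₂ := fun h => hvb (by simp [b, ← h])
        simp [hv, hk_inr v hvb, π₂]

theorem totalFaces_glue_add_choose_two {V₁ W₁ V₂ W₂ : Type*} [Finite V₁] [Finite V₂]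
    (σ : Fin D → V₁ ≃ W₁) (τ : Fin D → V₂ ≃ W₂) (v₁ : V₁) (w₂ : W₂) :
    totalFaces (glue σ τ v₁ w₂) + D.choose 2 = totalFaces σ + totalFaces τ := by
  have hpairs := Fintype.card_product_filter_lt (α := Fin D)
  rw [Fintype.card_fin] at hpairs
  rw [totalFaces, totalFaces, totalFaces, ← hpairs, Finset.card_eq_sum_ones,
    ← Finset.sum_add_distrib, ← Finset.sum_add_distrib]
  exact Finset.sum_congr rfl fun p _ => faceCount_glue_add_one σ τ v₁ w₂ p.1 p.2

theorem glue_degree_general {D : ℕ} {V₁ W₁ V₂ W₂ : Type*}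
    [Fintype V₁] [Fintype V₂]
    (σ : Fin D → V₁ ≃ W₁) (τ : Fin D → V₂ ≃ W₂) (v₁ : V₁) (w₂ : W₂) :
    graphDegree (glue σ τ v₁ w₂) = graphDegree σ + graphDegree τ := by
  have hfaces : (totalFaces (glue σ τ v₁ w₂) : ℚ) + D * (D - 1) / 2 =
      totalFaces σ + totalFaces τ := by
    rw [← Nat.cast_choose_two]
    exact_mod_cast totalFaces_glue_add_choose_two σ τ v₁ w₂
  have hverts : (Nat.card ({v : V₁ // v ≠ v₁} ⊕ V₂) : ℚ) + 1 = Nat.card V₁ + Nat.card V₂ := by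
    rw [Nat.card_sum, ← natCard_subtype_ne_add_one v₁]
    push_cast
    ring
  rw [graphDegree, graphDegree, graphDegree]
  linear_combination
    (Nat.factorial (D - 2) : ℚ) / 2 * (((D : ℚ) - 1) * ((D : ℚ) - 2) / 2 * hverts - hfaces)

/-- Additivity of the degree under the colored gluing:
`ω(σ ⋆_{(v₁,w₂)} τ) = ω(σ) + ω(τ)`. -/
theorem glue_degree {D : ℕ} (hD : 2 ≤ D) {V₁ W₁ V₂ W₂ : Type*}
    [Fintype V₁] [Fintype W₁] [Fintype V₂] [Fintype W₂]
    (hne₁ : Nonempty V₁) (hne₂ : Nonempty V₂)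
    (σ : Fin D → V₁ ≃ W₁) (τ : Fin D → V₂ ≃ W₂) (v₁ : V₁) (w₂ : W₂) :
    graphDegree (glue σ τ v₁ w₂) = graphDegree σ + graphDegree τ :=
  glue_degree_general σ τ v₁ w₂
end

section
/- Melonic graphs are closed under colored gluing: let D ≥ 2 and let (V₁, W₁, σ) and (V₂, W₂, τ) be closed D-colored graphs with V₁, V₂ nonempty, v₁ : V₁ a white vertex and w₂ : W₂ a black vertex. If ω(σ) = 0 and ω(τ) = 0 (i.e. both graphs are melonic, meaning of degree zero), then ω(σ ⋆_{(v₁,w₂)} τ) = 0. -/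
open scoped BigOperators

variable {D N : ℕ}

/-! Gluing adds degrees: `ω(σ ⋆ τ) = ω(σ) + ω(τ)`. The glued graph has `k₁ + k₂ - 1` white
vertices, and for each pair of colors `i, j` its `(i,j)`-face permutation is obtained from those
of `σ` and `τ` by cutting open the face of `σ` through `v₁` and the face of `τ` through `w₂` and
splicing them into a single face, all other faces surviving unchanged. So each `F^{ij}` drops by
exactly one, and the loss of `D(D-1)/2` faces exactly compensates the lost vertex in `ω`. -/

theorem sameCycleSetoid_mk_eq_mk {α : Type*} {e : Equiv.Perm α} {x y : α} :
    Quotient.mk (sameCycleSetoid e) x = Quotient.mk _ y ↔ e.SameCycle x y :=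
  Quotient.eq

theorem sameCycleSetoid_mk_apply {α : Type*} (e : Equiv.Perm α) (x : α) :
    Quotient.mk (sameCycleSetoid e) (e x) = Quotient.mk _ x :=
  Quotient.sound (Equiv.Perm.sameCycle_apply_left.mpr (.refl _ _))

namespace Equiv.Perm

variable {α γ : Type*} [Finite α] {e : Perm α} {p : Perm γ} {g : α → γ} {a a₀ : α}

theorem SameCycle.map_of_sameCycle_apply (hg : ∀ a ≠ a₀, p.SameCycle (g a) (g (e a)))
    (h : e.SameCycle a a₀) : p.SameCycle (g a) (g a₀) := by
  obtain ⟨n, -, hn⟩ := h.exists_pow_eq'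
  induction n generalizing a with
  | zero =>
    simp only [pow_zero, one_apply] at hn
    rw [hn]
  | succ n ih =>
    by_cases ha : a = a₀
    · rw [ha]
    · rw [pow_succ, mul_apply] at hn
      exact (hg a ha).trans (ih (sameCycle_apply_left.mpr h) hn)

theorem SameCycle.eq_of_invariant {δ : Type*} {g : α → δ} (hg : ∀ a, g (e a) = g a)
    (h : e.SameCycle a a₀) : g a = g a₀ :=
  sameCycle_one.mp (h.map_of_sameCycle_apply fun a _ => sameCycle_one.mpr (hg a).symm)

end Equiv.Perm

section Splice

open Equiv Perm Sum

variable {α β : Type*} (e : Perm α) (f : Perm β) (a₀ : α) (b₀ : β)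

/- `spliceMap e f a₀ b₀` deletes `a₀` and joins the `e`-cycle of `a₀` and the `f`-cycle of `b₀`
into one cycle `… → e⁻¹ a₀ → f b₀ → … → b₀ → e a₀ → …`; `spliceIncl` replaces `a₀` by `f b₀`. -/
open Classical in
noncomputable def spliceIncl (a : α) : {a // a ≠ a₀} ⊕ β :=
  if h : a = a₀ then inr (f b₀) else inl ⟨a, h⟩

open Classical in
noncomputable def spliceMap : {a // a ≠ a₀} ⊕ β → {a // a ≠ a₀} ⊕ β :=
  Sum.elim (fun a => spliceIncl f a₀ b₀ (e a))
    (fun b => if b = b₀ then spliceIncl f a₀ b₀ (e a₀) else inr (f b))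

/- Labels each element by its cycle before splicing, the joined cycle carrying the label of
the `f`-cycle of `b₀`. -/
open Classical in
noncomputable def spliceLabel :
    {a // a ≠ a₀} ⊕ β → Quotient (sameCycleSetoid e) ⊕ Quotient (sameCycleSetoid f) :=
  Sum.elim
    (fun a => if e.SameCycle a a₀ then inr (Quotient.mk _ b₀) else inl (Quotient.mk _ a.1))
    (fun b => inr (Quotient.mk _ b))

variable {e f a₀ b₀}

open Classical in
theorem spliceLabel_inl {a : α} (ha : a ≠ a₀) :
    spliceLabel e f a₀ b₀ (inl ⟨a, ha⟩) =
      if e.SameCycle a a₀ then inr (Quotient.mk _ b₀) else inl (Quotient.mk _ a) :=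
  rfl

theorem spliceLabel_inr (b : β) : spliceLabel e f a₀ b₀ (inr b) = inr (Quotient.mk _ b) := rfl

theorem spliceIncl_of_ne {a : α} (h : a ≠ a₀) : spliceIncl f a₀ b₀ a = inl ⟨a, h⟩ := dif_neg h

theorem spliceIncl_self : spliceIncl f a₀ b₀ a₀ = inr (f b₀) := dif_pos rfl

open Classical in
theorem spliceLabel_spliceIncl (a : α) :
    spliceLabel e f a₀ b₀ (spliceIncl f a₀ b₀ a) =
      if e.SameCycle a a₀ then inr (Quotient.mk _ b₀) else inl (Quotient.mk _ a) := by
  by_cases h : a = a₀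
  · subst h
    simp [spliceIncl_self, spliceLabel, sameCycleSetoid_mk_apply, SameCycle.refl]
  · simp [spliceIncl_of_ne h, spliceLabel]

theorem spliceLabel_ne (x : {a // a ≠ a₀} ⊕ β) :
    spliceLabel e f a₀ b₀ x ≠ inl (Quotient.mk _ a₀) := by
  rcases x with ⟨a, ha⟩ | b
  · rw [spliceLabel_inl]
    split_ifs with h
    · exact inr_ne_inl
    · exact fun h' => h (sameCycleSetoid_mk_eq_mk.mp (inl_injective h'))
  · exact inr_ne_inl

theorem exists_spliceLabel_eq {z : Quotient (sameCycleSetoid e) ⊕ Quotient (sameCycleSetoid f)}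
    (hz : z ≠ inl (Quotient.mk _ a₀)) : ∃ x, spliceLabel e f a₀ b₀ x = z := by
  rcases z with q | q
  · obtain ⟨a, rfl⟩ := Quotient.exists_rep q
    have h : ¬e.SameCycle a a₀ := fun h => hz (congrArg inl (sameCycleSetoid_mk_eq_mk.mpr h))
    exact ⟨inl ⟨a, fun ha => h (ha ▸ .refl _ _)⟩, by simp [spliceLabel_inl, h]⟩
  · obtain ⟨b, rfl⟩ := Quotient.exists_rep q
    exact ⟨inr b, rfl⟩

variable {p : Perm ({a // a ≠ a₀} ⊕ β)}

theorem spliceLabel_apply (hp : ⇑p = spliceMap e f a₀ b₀) (x : {a // a ≠ a₀} ⊕ β) :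
    spliceLabel e f a₀ b₀ (p x) = spliceLabel e f a₀ b₀ x := by
  rw [hp]
  rcases x with ⟨a, ha⟩ | b
  · rw [spliceMap, Sum.elim_inl, spliceLabel_spliceIncl,
      ← spliceIncl_of_ne (f := f) (b₀ := b₀) ha, spliceLabel_spliceIncl, sameCycle_apply_left,
      sameCycleSetoid_mk_apply]
  · by_cases hb : b = b₀
    · simp [spliceMap, hb, spliceLabel_spliceIncl, spliceLabel_inr, sameCycle_apply_left,
        SameCycle.refl]
    · simp [spliceMap, hb, spliceLabel_inr, sameCycleSetoid_mk_apply]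

theorem splice_apply_spliceIncl (hp : ⇑p = spliceMap e f a₀ b₀) {a : α} (ha : a ≠ a₀) :
    p (spliceIncl f a₀ b₀ a) = spliceIncl f a₀ b₀ (e a) := by
  rw [spliceIncl_of_ne ha, hp]
  rfl

variable [Finite α]

theorem sameCycle_splice_inr_apply (hp : ⇑p = spliceMap e f a₀ b₀) (b : β) :
    p.SameCycle (inr b) (inr (f b)) := by
  by_cases hb : b = b₀
  · rw [hb]
    have hstart : p (inr b₀) = spliceIncl f a₀ b₀ (e a₀) := by simp [hp, spliceMap]
    -- The cycle of `inr b₀` leaves `β` into the `e`-cycle of `a₀` and re-enters it at `f b₀`.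
    have hcycle : p.SameCycle (spliceIncl f a₀ b₀ (e a₀)) (spliceIncl f a₀ b₀ a₀) :=
      SameCycle.map_of_sameCycle_apply
        (fun a ha => ⟨1, by simp [splice_apply_spliceIncl hp ha]⟩) (SameCycle.refl _ _).apply_left
    rw [← hstart, spliceIncl_self] at hcycle
    exact hcycle.of_apply_left
  · exact ⟨1, by simp [hp, spliceMap, hb]⟩

theorem sameCycle_spliceIncl_apply (hp : ⇑p = spliceMap e f a₀ b₀) (a : α) :
    p.SameCycle (spliceIncl f a₀ b₀ a) (spliceIncl f a₀ b₀ (e a)) := by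
  by_cases ha : a = a₀
  · rw [ha]
    have hstart : p (inr b₀) = spliceIncl f a₀ b₀ (e a₀) := by simp [hp, spliceMap]
    rw [spliceIncl_self, ← hstart, sameCycle_apply_right]
    exact (sameCycle_splice_inr_apply hp b₀).symm
  · exact ⟨1, by simp [splice_apply_spliceIncl hp ha]⟩

theorem Equiv.Perm.SameCycle.splice_spliceIncl (hp : ⇑p = spliceMap e f a₀ b₀) {a a' : α}
    (h : e.SameCycle a a') :
    p.SameCycle (spliceIncl f a₀ b₀ a) (spliceIncl f a₀ b₀ a') :=
  h.map_of_sameCycle_apply fun a _ => sameCycle_spliceIncl_apply hp a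

theorem Equiv.Perm.SameCycle.splice_inr [Finite β] (hp : ⇑p = spliceMap e f a₀ b₀) {b b' : β}
    (h : f.SameCycle b b') :
    p.SameCycle (inr b) (inr b') :=
  h.map_of_sameCycle_apply (g := inr) fun b _ => sameCycle_splice_inr_apply hp b

theorem sameCycle_of_spliceLabel_eq_inl (hp : ⇑p = spliceMap e f a₀ b₀)
    {x : {a // a ≠ a₀} ⊕ β} {a : α} (h : spliceLabel e f a₀ b₀ x = inl (Quotient.mk _ a)) :
    p.SameCycle x (spliceIncl f a₀ b₀ a) := by
  rcases x with ⟨a', ha'⟩ | b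
  · by_cases hs : e.SameCycle a' a₀
    · simp [spliceLabel_inl, hs] at h
    · simp only [spliceLabel_inl, hs, if_false, inl.injEq, sameCycleSetoid_mk_eq_mk] at h
      rw [← spliceIncl_of_ne (f := f) (b₀ := b₀) ha']
      exact h.splice_spliceIncl hp
  · simp [spliceLabel_inr] at h

theorem sameCycle_of_spliceLabel_eq_inr [Finite β] (hp : ⇑p = spliceMap e f a₀ b₀)
    {x : {a // a ≠ a₀} ⊕ β} {b : β} (h : spliceLabel e f a₀ b₀ x = inr (Quotient.mk _ b)) :
    p.SameCycle x (inr b) := by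
  rcases x with ⟨a, ha⟩ | b'
  · by_cases hs : e.SameCycle a a₀
    · simp only [spliceLabel_inl, hs, if_true, inr.injEq, sameCycleSetoid_mk_eq_mk] at h
      rw [← spliceIncl_of_ne (f := f) (b₀ := b₀) ha]
      have hcycle := hs.splice_spliceIncl hp
      rw [spliceIncl_self] at hcycle
      exact hcycle.trans ((sameCycle_splice_inr_apply hp b₀).symm.trans (h.splice_inr hp))
    · simp [spliceLabel_inl, hs] at h
  · simp only [spliceLabel_inr, inr.injEq, sameCycleSetoid_mk_eq_mk] at h
    exact h.splice_inr hp

theorem sameCycle_of_spliceLabel_eq [Finite β] (hp : ⇑p = spliceMap e f a₀ b₀)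
    {x y : {a // a ≠ a₀} ⊕ β} (h : spliceLabel e f a₀ b₀ x = spliceLabel e f a₀ b₀ y) :
    p.SameCycle x y := by
  rcases hx : spliceLabel e f a₀ b₀ x with q | q <;> obtain ⟨z, rfl⟩ := Quotient.exists_rep q
  · exact (sameCycle_of_spliceLabel_eq_inl hp hx).trans
      (sameCycle_of_spliceLabel_eq_inl hp (h ▸ hx)).symm
  · exact (sameCycle_of_spliceLabel_eq_inr hp hx).trans
      (sameCycle_of_spliceLabel_eq_inr hp (h ▸ hx)).symm

theorem permOrbitCount_splice [Finite β] (hp : ⇑p = spliceMap e f a₀ b₀) :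
    permOrbitCount p + 1 = permOrbitCount e + permOrbitCount f := by
  classical
  let label : Quotient (sameCycleSetoid p) → _ :=
    Quotient.lift (spliceLabel e f a₀ b₀) fun _ _ h => h.eq_of_invariant (spliceLabel_apply hp)
  have hne : ∀ q, label q ≠ inl (Quotient.mk _ a₀) := Quotient.ind spliceLabel_ne
  have hlabel : Function.Bijective fun q => (⟨label q, hne q⟩ :
      {z // z ≠ inl (Quotient.mk _ a₀)}) := by
    refine ⟨fun q q' h => ?_, fun ⟨z, hz⟩ => ?_⟩
    · induction q, q' using Quotient.ind₂
      exact Quotient.sound (sameCycle_of_spliceLabel_eq hp (congrArg Subtype.val h))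
    · obtain ⟨x, hx⟩ := exists_spliceLabel_eq hz
      exact ⟨Quotient.mk _ x, Subtype.ext hx⟩
  have hcard := Nat.card_congr
    ((Equiv.optionCongr (Equiv.ofBijective _ hlabel)).trans (Equiv.optionSubtypeNe _))
  rw [Finite.card_option, Nat.card_sum] at hcard
  exact hcard

end Splice

theorem card_filter_fst_lt_snd :
    (Finset.univ.filter (fun p : Fin D × Fin D => p.1 < p.2)).card = D.choose 2 := by
  simpa [Finset.univ_product_univ] using
    Finset.card_product_filter_lt (s := Finset.univ (α := Fin D))

section Glue

variable {V₁ W₁ V₂ W₂ : Type*} (σ : Fin D → V₁ ≃ W₁) (τ : Fin D → V₂ ≃ W₂) (v₁ : V₁) (w₂ : W₂)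

theorem glue_trans_symm_eq_spliceMap (i j : Fin D) :
    ⇑((glue σ τ v₁ w₂ i).trans (glue σ τ v₁ w₂ j).symm) =
      spliceMap ((σ i).trans (σ j).symm) ((τ i).trans (τ j).symm) v₁ ((τ i).symm w₂) := by
  funext x
  rcases x with ⟨a, ha⟩ | b
  · by_cases h : (σ j).symm (σ i a) = v₁ <;> simp [glue, spliceMap, spliceIncl, h]
  · by_cases hb : τ i b = w₂
    · by_cases h : (σ j).symm (σ i v₁) = v₁ <;>
        simp [glue, spliceMap, spliceIncl, hb, h, Equiv.eq_symm_apply]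
    · simp [glue, spliceMap, spliceIncl, hb, Equiv.eq_symm_apply]

variable [Finite V₁] [Finite V₂]

theorem faceCount_glue (i j : Fin D) :
    faceCount (glue σ τ v₁ w₂) i j + 1 = faceCount σ i j + faceCount τ i j :=
  permOrbitCount_splice (glue_trans_symm_eq_spliceMap σ τ v₁ w₂ i j)

theorem totalFaces_glue :
    totalFaces (glue σ τ v₁ w₂) + D.choose 2 = totalFaces σ + totalFaces τ := by
  rw [totalFaces, totalFaces, totalFaces, ← card_filter_fst_lt_snd, Finset.card_eq_sum_ones,
    ← Finset.sum_add_distrib, ← Finset.sum_add_distrib]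
  exact Finset.sum_congr rfl fun p _ => faceCount_glue σ τ v₁ w₂ p.1 p.2

theorem card_glue_white :
    Nat.card ({v // v ≠ v₁} ⊕ V₂) + 1 = Nat.card V₁ + Nat.card V₂ := by
  classical
  rw [Nat.card_sum, add_right_comm, ← Finite.card_option,
    Nat.card_congr (Equiv.optionSubtypeNe v₁)]

theorem graphDegree_glue :
    graphDegree (glue σ τ v₁ w₂) = graphDegree σ + graphDegree τ := by
  have hF : (totalFaces (glue σ τ v₁ w₂) : ℚ) + D * (D - 1) / 2 =
      totalFaces σ + totalFaces τ := by
    rw [← Nat.cast_choose_two]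
    exact_mod_cast totalFaces_glue σ τ v₁ w₂
  have hV : (Nat.card ({v // v ≠ v₁} ⊕ V₂) : ℚ) + 1 = Nat.card V₁ + Nat.card V₂ := by
    exact_mod_cast card_glue_white (V₂ := V₂) v₁
  unfold graphDegree
  linear_combination ((D - 2).factorial / 2 : ℚ) * (((D - 1) * (D - 2) / 2 : ℚ) * hV - hF)

end Glue

theorem glue_melonic_general {D : ℕ} {V₁ W₁ V₂ W₂ : Type*}
    [Fintype V₁] [Fintype V₂]
    (σ : Fin D → V₁ ≃ W₁) (τ : Fin D → V₂ ≃ W₂) (v₁ : V₁) (w₂ : W₂)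
    (hσ : graphDegree σ = 0) (hτ : graphDegree τ = 0) :
    graphDegree (glue σ τ v₁ w₂) = 0 := by
  rw [graphDegree_glue, hσ, hτ, add_zero]

/-- Melonic graphs (graphs of vanishing degree) are closed under the
colored gluing. -/
theorem glue_melonic {D : ℕ} (hD : 2 ≤ D) {V₁ W₁ V₂ W₂ : Type*}
    [Fintype V₁] [Fintype W₁] [Fintype V₂] [Fintype W₂]
    (hne₁ : Nonempty V₁) (hne₂ : Nonempty V₂)
    (σ : Fin D → V₁ ≃ W₁) (τ : Fin D → V₂ ≃ W₂) (v₁ : V₁) (w₂ : W₂)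
    (hσ : graphDegree σ = 0) (hτ : graphDegree τ = 0) :
    graphDegree (glue σ τ v₁ w₂) = 0 :=
  glue_melonic_general σ τ v₁ w₂ hσ hτ
end

section
/- Index-sum evaluation for one color: let V and W be finite types, σ, τ : V ≃ W bijections, and N ≥ 1. Then Σ_{a : V → Fin N} Σ_{b : W → Fin N} Π_{v : V} (if a v = b (σ v) then 1 else 0) · (if a v = b (τ v) then 1 else 0) = N^c, where c is the number of orbits on W of the permutation τ.symm.trans σ (i.e. w ↦ σ (τ.symm w)). -/
open scoped BigOperators

variable {D N : ℕ}

/-!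
Summing over `a` first, the product of deltas `δ(a v, b (σ v)) δ(a v, b (τ v))` survives
exactly for `a = b ∘ σ = b ∘ τ`, so the sum counts the colourings `b : W → Fin N` with
`b ∘ σ = b ∘ τ`, i.e. those invariant under `e = τ.symm.trans σ`. An `e`-invariant colouring
is constant on the orbits of `e`, so these are the colourings of the `c` orbits: `N ^ c`.
-/

namespace Equiv.Perm

variable {α β : Type*} {e : Perm α} {b : α → β}

theorem apply_zpow_apply_of_invariant (hb : ∀ x, b (e x) = b x) (i : ℤ) (x : α) :
    b ((e ^ i) x) = b x := by
  induction i using Int.induction_on generalizing x with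
  | zero => rfl
  | succ n ih => rw [zpow_add_one, mul_apply, ih, hb]
  | pred n ih => rw [zpow_sub_one, mul_apply, ih, ← hb, ← mul_apply, mul_inv_cancel, one_apply]

theorem SameCycle.apply_eq_of_invariant (hb : ∀ x, b (e x) = b x) {x y : α}
    (h : e.SameCycle x y) : b x = b y := by
  obtain ⟨i, rfl⟩ := h
  exact (apply_zpow_apply_of_invariant hb i x).symm

variable (e) in
def invariantFunEquivOrbitFun :
    {b : α → β // ∀ x, b (e x) = b x} ≃ (Quotient (sameCycleSetoid e) → β) where
  toFun b := Quotient.lift b.1 fun _ _ h => SameCycle.apply_eq_of_invariant b.2 h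
  invFun g := ⟨fun x => g ⟦x⟧,
    fun x => congrArg g (Quotient.sound (sameCycle_apply_left.2 (.refl e x)))⟩
  left_inv _ := rfl
  right_inv _ := funext fun q => Quotient.inductionOn q fun _ => rfl

theorem card_invariantFun [Finite α] :
    Nat.card {b : α → β // ∀ x, b (e x) = b x} = Nat.card β ^ permOrbitCount e := by
  rw [Nat.card_congr (invariantFunEquivOrbitFun e), Nat.card_fun, permOrbitCount]

end Equiv.Perm

theorem Fintype.sum_prod_ite_eq_mul_ite_eq {V ι R : Type*} [Fintype V] [DecidableEq V]
    [Fintype ι] [DecidableEq ι] [CommSemiring R] (f g : V → ι) :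
    ∑ a : V → ι, ∏ v, ((if a v = f v then (1 : R) else 0) * (if a v = g v then 1 else 0)) =
      if f = g then 1 else 0 := by
  have h_delta (v : V) :
      ∑ i, ((if i = f v then (1 : R) else 0) * (if i = g v then 1 else 0)) =
        if f v = g v then 1 else 0 := by
    simp only [mul_ite, mul_one, mul_zero, Finset.sum_ite_eq', Finset.mem_univ, if_true, eq_comm]
  rw [← Fintype.prod_sum fun v i => (if i = f v then (1 : R) else 0) * (if i = g v then 1 else 0),
    Fintype.prod_congr _ _ h_delta, Fintype.prod_boole]
  simp only [funext_iff]

theorem Equiv.comp_eq_comp_iff_invariant {V W β : Type*} (σ τ : V ≃ W) (b : W → β) :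
    b ∘ σ = b ∘ τ ↔ ∀ w, b (τ.symm.trans σ w) = b w := by
  rw [funext_iff, τ.forall_congr_left]
  simp

open Classical in
theorem index_sum_eval_general {N : ℕ} {V W : Type*} [Fintype V] [Fintype W]
    (σ τ : V ≃ W) :
    ∑ a : V → Fin N, ∑ b : W → Fin N,
        ∏ v : V, ((if a v = b (σ v) then (1 : ℂ) else 0) *
          (if a v = b (τ v) then (1 : ℂ) else 0))
      = (N : ℂ) ^ permOrbitCount (τ.symm.trans σ) := by
  rw [Finset.sum_comm]
  refine (Fintype.sum_congr _ _ fun b =>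
    Fintype.sum_prod_ite_eq_mul_ite_eq (b ∘ σ) (b ∘ τ)).trans ?_
  simp_rw [Equiv.comp_eq_comp_iff_invariant σ τ, Finset.sum_boole]
  rw [← Fintype.card_subtype, ← Nat.card_eq_fintype_card, Equiv.Perm.card_invariantFun,
    Nat.card_fin, Nat.cast_pow]

open Classical in
theorem index_sum_eval {N : ℕ} (hN : 1 ≤ N) {V W : Type*} [Fintype V] [Fintype W]
    (σ τ : V ≃ W) :
    ∑ a : V → Fin N, ∑ b : W → Fin N,
        ∏ v : V, ((if a v = b (σ v) then (1 : ℂ) else 0) *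
          (if a v = b (τ v) then (1 : ℂ) else 0))
      = (N : ℂ) ^ permOrbitCount (τ.symm.trans σ) :=
  index_sum_eval_general σ τ
end

section
/- Face splitting over D-bubbles: let σ : Fin (D+1) → (V ≃ W) be a closed (D+1)-colored graph with colors 0, 1, ..., D, and let its D-bubbles be the orbits on V of the subgroup generated by { (σ i).trans (σ j).symm : i, j ≥ 1 }. Then for every pair of colors 1 ≤ i < j ≤ D each (i,j)-face is contained in a single D-bubble, and consequently Σ_{i=1}^{D} F^{0i}(σ) = F_G − Σ_ρ F_{B_ρ}, where F_G is the total number of faces of σ over all pairs of colors in {0,1,...,D}, and F_{B_ρ} is the number of faces with colors in {1,...,D} of the D-bubble B_ρ (the restriction of the bijections σ i, i ≥ 1, to the ρ-th orbit). -/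
open scoped BigOperators

variable {D N : ℕ}

/-- White vertices of the connected component `c` of a closed `D`-colored graph. -/
abbrev compWhite {V W : Type*} (σ : Fin D → V ≃ W) (c : Quotient (reachSetoid σ)) : Type _ :=
  {v : V // Quotient.mk (reachSetoid σ) v = c}

/-- Black vertices of the connected component `c` of a closed `D`-colored graph. -/
abbrev compBlack {V W : Type*} (σ : Fin D → V ≃ W) (c : Quotient (reachSetoid σ)) : Type _ :=
  {w : W // ∃ i, Quotient.mk (reachSetoid σ) ((σ i).symm w) = c}

lemma symm_reach {V W : Type*} (σ : Fin D → V ≃ W) (i j : Fin D) (w : W) :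
    Quotient.mk (reachSetoid σ) ((σ i).symm w) = Quotient.mk (reachSetoid σ) ((σ j).symm w) :=
  Quotient.sound ⟨(σ i).trans (σ j).symm, Subgroup.subset_closure ⟨i, j, rfl⟩, by simp⟩

/-- The restriction of the colored bijections to the connected component `c`. -/
def compEquiv {V W : Type*} (σ : Fin D → V ≃ W) (c : Quotient (reachSetoid σ)) (i : Fin D) :
    compWhite σ c ≃ compBlack σ c :=
  (σ i).subtypeEquiv fun v => by
    constructor
    · intro h
      exact ⟨i, by simpa using h⟩
    · rintro ⟨j, hj⟩
      have hv : Quotient.mk (reachSetoid σ) v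
          = Quotient.mk (reachSetoid σ) ((σ j).symm (σ i v)) := by
        conv_lhs => rw [show v = (σ i).symm (σ i v) by simp]
        exact symm_reach σ i j (σ i v)
      exact hv.trans hj

lemma comp_nonempty {V W : Type*} (σ : Fin D → V ≃ W) (c : Quotient (reachSetoid σ)) :
    Nonempty (compWhite σ c) := by
  obtain ⟨v, hv⟩ := Quotient.exists_rep c
  exact ⟨⟨v, hv⟩⟩

/-!
A face of colors `i, j ≥ 1` is an orbit of `(σ i).trans (σ j).symm`, an element of the bubble
group, so it lies inside one `D`-bubble. Hence the `(i,j)`-faces of the graph are exactly the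
`(i,j)`-faces of its bubbles, counted bubble by bubble. Splitting the pairs of colors into those
containing `0` and those that do not yields the identity.
-/

open Equiv

lemma Fin.sum_filter_lt_succ {M : Type*} [AddCommMonoid M] {n : ℕ}
    (f : Fin (n + 1) → Fin (n + 1) → M) :
    ∑ p ∈ Finset.univ.filter (fun p : Fin (n + 1) × Fin (n + 1) => p.1 < p.2), f p.1 p.2
      = ∑ i : Fin n, f 0 i.succ
        + ∑ p ∈ Finset.univ.filter (fun p : Fin n × Fin n => p.1 < p.2), f p.1.succ p.2.succ := by
  simp only [Finset.sum_filter, Fintype.sum_prod_type, Fin.sum_univ_succ, Fin.succ_lt_succ_iff,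
    Fin.succ_pos, Fin.not_lt_zero, if_true, if_false, zero_add]

lemma mk_apply_eq_of_sameCycleSetoid_le {α : Type*} {s : Setoid α} {e : Perm α}
    (hle : sameCycleSetoid e ≤ s) (x : α) : Quotient.mk s (e x) = Quotient.mk s x :=
  Quotient.sound (hle (Perm.sameCycle_apply_left.2 (Perm.SameCycle.refl e x)))

lemma permOrbitCount_eq_finsum_subtypePerm {α : Type*} [Finite α] {s : Setoid α} {e : Perm α}
    (hle : sameCycleSetoid e ≤ s) :
    permOrbitCount e = ∑ᶠ q : Quotient s,
      permOrbitCount (e.subtypePerm (p := fun x => Quotient.mk s x = q)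
        fun x => by rw [mk_apply_eq_of_sameCycleSetoid_le hle]) := by
  have : Fintype (Quotient s) := Fintype.ofFinite _
  rw [permOrbitCount, ← Nat.card_congr (Setoid.sigmaQuotientEquivOfLe hle), Nat.card_sigma,
    finsum_eq_sum_of_fintype]
  exact Finset.sum_congr rfl fun q _ => Nat.card_congr <|
    Quotient.congr (Equiv.refl _) fun x y => Perm.sameCycle_subtypePerm.symm

lemma trans_symm_mem_bubbleGroup {V W : Type*} (σ : Fin D → V ≃ W) (i j : Fin D) :
    (σ i).trans (σ j).symm ∈ bubbleGroup σ :=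
  Subgroup.subset_closure ⟨i, j, rfl⟩

lemma sameCycleSetoid_le_reachSetoid {V W : Type*} (σ : Fin D → V ≃ W) (i j : Fin D) :
    sameCycleSetoid ((σ i).trans (σ j).symm) ≤ reachSetoid σ := fun _ _ ⟨n, hn⟩ =>
  ⟨_, zpow_mem (trans_symm_mem_bubbleGroup σ i j) n, hn⟩

lemma permOrbitCount_trans_symm_eq_finsum_compEquiv {V W : Type*} [Finite V]
    (σ : Fin D → V ≃ W) (i j : Fin D) :
    permOrbitCount ((σ i).trans (σ j).symm : Perm V) = ∑ᶠ ρ : Quotient (reachSetoid σ),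
      permOrbitCount ((compEquiv σ ρ i).trans (compEquiv σ ρ j).symm) :=
  (permOrbitCount_eq_finsum_subtypePerm (sameCycleSetoid_le_reachSetoid σ i j)).trans <|
    finsum_congr fun _ => congrArg permOrbitCount (Equiv.ext fun _ => rfl)

theorem face_bubble_split_general {D : ℕ} {V W : Type*} [Fintype V]
    (σ : Fin (D + 1) → V ≃ W) :
    (∀ i j : Fin D, i < j → ∀ v v' : V,
        Equiv.Perm.SameCycle ((σ i.succ).trans (σ j.succ).symm) v v' →
          Quotient.mk (reachSetoid (fun k : Fin D => σ k.succ)) v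
            = Quotient.mk (reachSetoid (fun k : Fin D => σ k.succ)) v') ∧
      ∑ i : Fin D, permOrbitCount ((σ 0).trans (σ i.succ).symm)
        = (∑ p ∈ Finset.univ.filter (fun p : Fin (D + 1) × Fin (D + 1) => p.1 < p.2),
            permOrbitCount ((σ p.1).trans (σ p.2).symm))
          - ∑ᶠ ρ : Quotient (reachSetoid (fun k : Fin D => σ k.succ)),
              ∑ p ∈ Finset.univ.filter (fun p : Fin D × Fin D => p.1 < p.2),
                permOrbitCount
                  ((compEquiv (fun k : Fin D => σ k.succ) ρ p.1).trans
                    (compEquiv (fun k : Fin D => σ k.succ) ρ p.2).symm) := by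
  set τ : Fin D → V ≃ W := fun k => σ k.succ
  refine ⟨fun i j _ v v' h => Quotient.sound (sameCycleSetoid_le_reachSetoid τ i j h), ?_⟩
  have : Fintype (Quotient (reachSetoid τ)) := Fintype.ofFinite _
  rw [Fin.sum_filter_lt_succ fun a b => permOrbitCount ((σ a).trans (σ b).symm),
    finsum_eq_sum_of_fintype, Finset.sum_comm]
  simp_rw [← finsum_eq_sum_of_fintype, ← permOrbitCount_trans_symm_eq_finsum_compEquiv]
  exact (Nat.add_sub_cancel _ _).symm

/-- Face splitting over `D`-bubbles of a closed `(D+1)`-colored graph: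
every `(i,j)`-face with colors `1 ≤ i < j ≤ D` is contained in a single `D`-bubble, and
`Σ_{i=1}^D F^{0i} = F_G − Σ_ρ F_{B_ρ}`. -/
theorem face_bubble_split {D : ℕ} (hD : 1 ≤ D) {V W : Type*} [Fintype V] [Fintype W]
    (σ : Fin (D + 1) → V ≃ W) :
    (∀ i j : Fin D, i < j → ∀ v v' : V,
        Equiv.Perm.SameCycle ((σ i.succ).trans (σ j.succ).symm) v v' →
          Quotient.mk (reachSetoid (fun k : Fin D => σ k.succ)) v
            = Quotient.mk (reachSetoid (fun k : Fin D => σ k.succ)) v') ∧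
      ∑ i : Fin D, permOrbitCount ((σ 0).trans (σ i.succ).symm)
        = (∑ p ∈ Finset.univ.filter (fun p : Fin (D + 1) × Fin (D + 1) => p.1 < p.2),
            permOrbitCount ((σ p.1).trans (σ p.2).symm))
          - ∑ᶠ ρ : Quotient (reachSetoid (fun k : Fin D => σ k.succ)),
              ∑ p ∈ Finset.univ.filter (fun p : Fin D × Fin D => p.1 < p.2),
                permOrbitCount
                  ((compEquiv (fun k : Fin D => σ k.succ) ρ p.1).trans
                    (compEquiv (fun k : Fin D => σ k.succ) ρ p.2).symm) :=
  face_bubble_split_general σ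
end

section
/- Unitary invariance of trace invariants: let (V, W, σ) be a closed D-colored graph, N ≥ 1, and U : Fin D → Matrix.unitaryGroup (Fin N) ℂ a family of unitary N × N matrices. For a tensor T : (Fin D → Fin N) → ℂ define the transformed tensor (U • T) (a) = Σ_{n : Fin D → Fin N} (Π_{i : Fin D} (U i) (a i) (n i)) · T n. Then Tr_σ(U • T) = Tr_σ(T). -/
/-!
Expanding both products, `Tr_σ(U • T)` becomes a sum over labellings `n` of the white and `m` of
the black vertices of `Π_v T (n v) · Π_w conj (T (m w))`, weighted by a contraction of the
unitaries along the lines. Each line of colour `i` from `v` to `w` contributes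
`Σ_c (U i) c (n v i) · conj ((U i) c (m w i)) = ((U i)ᴴ * U i) (m w i) (n v i)`, so unitarity
collapses the weight to the indicator that `m` is `n` carried along the lines, which leaves `Tr_σ(T)`.
-/

open scoped BigOperators

variable {D N : ℕ}

/-- The tensor transformed under the external tensor product of fundamental representations
of the unitary group: `(U • T) a = Σ_n (Π_i (U i) (a i) (n i)) T n`. -/
noncomputable def uTransform {D N : ℕ} (U : Fin D → Matrix.unitaryGroup (Fin N) ℂ)
    (T : (Fin D → Fin N) → ℂ) : (Fin D → Fin N) → ℂ :=
  fun a => ∑ n : Fin D → Fin N, (∏ i, ((U i : Matrix (Fin N) (Fin N) ℂ) (a i) (n i))) * T n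

open Finset

lemma Matrix.UnitaryGroup.sum_apply_mul_conj_apply {κ R : Type*} [Fintype κ] [DecidableEq κ]
    [CommRing R] [StarRing R] (U : Matrix.unitaryGroup κ R) (y z : κ) :
    ∑ x, (U : Matrix κ κ R) x y * starRingEnd R ((U : Matrix κ κ R) x z) =
      if z = y then 1 else 0 := by
  rw [← Matrix.one_apply, ← Matrix.UnitaryGroup.star_mul_self, Matrix.mul_apply]
  exact Finset.sum_congr rfl fun x _ => mul_comm _ _

lemma sum_sum_mul_conj_sum {R α β γ : Type*} [CommSemiring R] [StarRing R]
    [Fintype α] [Fintype β] [Fintype γ]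
    (A : α → β → R) (P : β → R) (B : α → γ → R) (Q : γ → R) :
    ∑ a, (∑ n, A a n * P n) * starRingEnd R (∑ m, B a m * Q m) =
      ∑ n, ∑ m, (P n * starRingEnd R (Q m)) * ∑ a, A a n * starRingEnd R (B a m) := by
  simp_rw [map_sum, map_mul, sum_mul_sum, mul_sum]
  rw [Finset.sum_comm]
  refine Finset.sum_congr rfl fun n _ => ?_
  rw [Finset.sum_comm]
  exact Finset.sum_congr rfl fun m _ => Finset.sum_congr rfl fun a _ => by ring

lemma prod_prod_symm_apply {ι V W M : Type*} [Fintype ι] [Fintype V] [Fintype W] [CommMonoid M]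
    (σ : ι → V ≃ W) (f : ι → V → W → M) :
    ∏ w, ∏ i, f i ((σ i).symm w) w = ∏ v, ∏ i, f i v (σ i v) := by
  rw [prod_comm, prod_comm (s := (univ : Finset V))]
  exact prod_congr rfl fun i _ =>
    (Fintype.prod_equiv (σ i) _ _ fun v => by simp).symm

def blackLabels {ι κ V W : Type*} (σ : ι → V ≃ W) (a : V → ι → κ) : W → ι → κ :=
  fun w i => a ((σ i).symm w) i

lemma blackLabels_eq_iff {ι κ V W : Type*} (σ : ι → V ≃ W) (a : V → ι → κ)
    (b : W → ι → κ) :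
    blackLabels σ a = b ↔ ∀ v i, b (σ i v) i = a v i := by
  refine ⟨fun h v i => by simp [← h, blackLabels], fun h => funext₂ fun w i => ?_⟩
  simpa [blackLabels] using (h ((σ i).symm w) i).symm

lemma sum_prod_mul_conj_prod_eq_ite_blackLabels_eq {ι κ V W R : Type*}
    [Fintype ι] [DecidableEq ι] [Fintype κ] [DecidableEq κ] [Fintype V] [DecidableEq V]
    [Fintype W] [CommRing R] [StarRing R]
    (σ : ι → V ≃ W) (U : ι → Matrix.unitaryGroup κ R) (n : V → ι → κ)
    (m : W → ι → κ) :
    ∑ a : V → ι → κ, (∏ v, ∏ i, (U i : Matrix κ κ R) (a v i) (n v i)) *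
        starRingEnd R (∏ w, ∏ i, (U i : Matrix κ κ R) (blackLabels σ a w i) (m w i)) =
      if blackLabels σ n = m then 1 else 0 := by
  calc _ = ∑ a : V → ι → κ, ∏ v, ∏ i, (U i : Matrix κ κ R) (a v i) (n v i) *
          starRingEnd R ((U i : Matrix κ κ R) (a v i) (m (σ i v) i)) := by
        refine Finset.sum_congr rfl fun a _ => ?_
        simp only [map_prod, blackLabels]
        rw [prod_prod_symm_apply σ fun i v w =>
          starRingEnd R ((U i : Matrix κ κ R) (a v i) (m w i))]
        simp only [← prod_mul_distrib]
    _ = ∏ v, ∏ i, ∑ c, (U i : Matrix κ κ R) c (n v i) *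
          starRingEnd R ((U i : Matrix κ κ R) c (m (σ i v) i)) := by
        simp only [Fintype.prod_sum]
    _ = _ := by
        simp only [Matrix.UnitaryGroup.sum_apply_mul_conj_apply, prod_boole, mem_univ,
          forall_const, blackLabels_eq_iff]

lemma prod_uTransform {V : Type*} [Fintype V] [DecidableEq V]
    (U : Fin D → Matrix.unitaryGroup (Fin N) ℂ) (T : (Fin D → Fin N) → ℂ)
    (a : V → Fin D → Fin N) :
    ∏ v, uTransform U T (a v) =
      ∑ n : V → Fin D → Fin N,
        (∏ v, ∏ i, (U i : Matrix (Fin N) (Fin N) ℂ) (a v i) (n v i)) * ∏ v, T (n v) := by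
  simp only [uTransform, Fintype.prod_sum, prod_mul_distrib]

theorem trace_unitary_invariant_general {D N : ℕ} {V W : Type*}
    [Finite V] [Finite W] (σ : Fin D → V ≃ W)
    (U : Fin D → Matrix.unitaryGroup (Fin N) ℂ) (T : (Fin D → Fin N) → ℂ) :
    traceInv σ (uTransform U T) = traceInv σ T := by
  classical
  let := Fintype.ofFinite V
  let := Fintype.ofFinite W
  calc traceInv σ (uTransform U T)
      = ∑ a : V → Fin D → Fin N, (∏ v, uTransform U T (a v)) *
          starRingEnd ℂ (∏ w, uTransform U T (blackLabels σ a w)) := by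
        simp only [traceInv, map_prod]
        rfl
    _ = ∑ n : V → Fin D → Fin N, ∑ m : W → Fin D → Fin N,
          ((∏ v, T (n v)) * starRingEnd ℂ (∏ w, T (m w))) *
            if blackLabels σ n = m then 1 else 0 := by
        simp only [prod_uTransform, sum_sum_mul_conj_sum,
          sum_prod_mul_conj_prod_eq_ite_blackLabels_eq]
    _ = traceInv σ T := by
        simp only [mul_ite, mul_one, mul_zero, Fintype.sum_ite_eq, map_prod]
        rfl

/-- **Statement 14.** Unitary invariance of the trace invariants:
`Tr_σ(U • T) = Tr_σ(T)`. -/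
theorem trace_unitary_invariant {D N : ℕ} (hD : 1 ≤ D) (hN : 1 ≤ N) {V W : Type*}
    [Finite V] [Finite W] (σ : Fin D → V ≃ W)
    (U : Fin D → Matrix.unitaryGroup (Fin N) ℂ) (T : (Fin D → Fin N) → ℂ) :
    traceInv σ (uTransform U T) = traceInv σ T :=
  trace_unitary_invariant_general σ U T
end

section
/- Bound on the number of components of a contraction: let (V, W, σ) be a connected closed D-colored graph with |V| = |W| ≥ 2, let v₁ : V be a white vertex and w₁ : W a black vertex. Then the contracted graph σ/(v₁,w₁) has at most D connected components (its vertex set being partitioned into the orbits of the subgroup generated by { (σ' i).trans (σ' j).symm : i, j : Fin D }, where σ' denotes the contracted family of bijections). -/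
open scoped BigOperators

variable {D N : ℕ}

/-!
Every white vertex `v ≠ v₁` of the contraction is connected to one of the at most `D` white
neighbours `(σ k)⁻¹ w₁` of the deleted black vertex. Indeed, call `v` anchored if it is `v₁` or
is so connected; a step `v ↦ (σ j)⁻¹ (σ i v)` of the original graph is also a step of the
contraction unless it passes through `v₁` or `w₁`, and in those cases the step either ends at a
neighbour of `w₁` or is replaced by a contracted step starting from one. So the anchored
vertices are closed under the generators of `bubbleGroup σ`, and by connectivity they are all
of `V`.
-/

section BubbleGroup

variable {V W : Type*} (σ : Fin D → V ≃ W)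

lemma reachSetoid_rel_symm_apply (i j : Fin D) (x : V) : reachSetoid σ x ((σ j).symm (σ i x)) :=
  ⟨(σ i).trans (σ j).symm, Subgroup.subset_closure ⟨i, j, rfl⟩, rfl⟩

lemma mapsTo_of_mem_bubbleGroup {S : Set V} (hS : ∀ i j, Set.MapsTo ((σ j).symm ∘ σ i) S S)
    {g : Equiv.Perm V} (hg : g ∈ bubbleGroup σ) : Set.MapsTo g S S := by
  induction hg using Subgroup.closure_induction'' with
  | mem _ hx => obtain ⟨i, j, rfl⟩ := hx; exact hS i j
  | inv_mem _ hx => obtain ⟨i, j, rfl⟩ := hx; exact hS j i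
  | one => exact Set.mapsTo_id S
  | mul _ _ _ _ hx hy => exact hx.comp hy

lemma IsConnectedGraph.eq_univ_of_mapsTo (hconn : IsConnectedGraph σ) {S : Set V}
    (hS : ∀ i j, Set.MapsTo ((σ j).symm ∘ σ i) S S) {v : V} (hv : v ∈ S) : S = Set.univ := by
  refine Set.eq_univ_of_forall fun v' => ?_
  obtain ⟨g, hg, rfl⟩ := hconn v v'
  exact mapsTo_of_mem_bubbleGroup σ hS hg hv

end BubbleGroup

section Contract

variable {V W : Type*} (σ : Fin D → V ≃ W) (v₁ : V) (w₁ : W)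

lemma contract_apply_of_ne {i : Fin D} {v : {v : V // v ≠ v₁}} (h : σ i v ≠ w₁) :
    (contract σ v₁ w₁ i v).1 = σ i v := by
  simp [contract, h]

lemma contract_apply_of_eq {i : Fin D} {v : {v : V // v ≠ v₁}} (h : σ i v = w₁) :
    (contract σ v₁ w₁ i v).1 = σ i v₁ := by
  simp [contract, h]

lemma contract_symm_apply_of_ne {i : Fin D} {w : {w : W // w ≠ w₁}} (h : (σ i).symm w ≠ v₁) :
    ((contract σ v₁ w₁ i).symm w).1 = (σ i).symm w := by
  simp [contract, h]

lemma reachSetoid_contract_rel {i j : Fin D} {v : {v : V // v ≠ v₁}} {x : V}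
    (hx : (contract σ v₁ w₁ i v).1 = σ i x) (hne : (σ j).symm (σ i x) ≠ v₁) :
    reachSetoid (contract σ v₁ w₁) v ⟨(σ j).symm (σ i x), hne⟩ := by
  convert reachSetoid_rel_symm_apply (contract σ v₁ w₁) i j v
  rw [contract_symm_apply_of_ne σ v₁ w₁ (by rwa [hx]), hx]

def anchoredSet : Set V :=
  {v | ∀ h : v ≠ v₁, ∃ k, ∃ hk : (σ k).symm w₁ ≠ v₁,
    reachSetoid (contract σ v₁ w₁) ⟨v, h⟩ ⟨(σ k).symm w₁, hk⟩}

lemma mapsTo_anchoredSet (i j : Fin D) :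
    Set.MapsTo ((σ j).symm ∘ σ i) (anchoredSet σ v₁ w₁) (anchoredSet σ v₁ w₁) := by
  intro v hv hu
  let R := reachSetoid (contract σ v₁ w₁)
  by_cases hw : σ i v = w₁
  · exact ⟨j, by simpa [hw] using hu, by simp only [Function.comp_apply, hw]; exact R.refl _⟩
  by_cases hv₁ : v = v₁
  · subst hv₁
    -- in the contraction, the colour-`i` line at `(σ i)⁻¹ w₁` is rerouted to `σ i v₁`
    have ha : (σ i).symm w₁ ≠ v := fun h => hw (by rw [← h, Equiv.apply_symm_apply])
    exact ⟨i, ha, R.symm <| reachSetoid_contract_rel σ v w₁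
      (contract_apply_of_eq σ v w₁ (v := ⟨_, ha⟩) (Equiv.apply_symm_apply _ _)) hu⟩
  obtain ⟨k, hk, hrel⟩ := hv hv₁
  exact ⟨k, hk, R.trans (R.symm <| reachSetoid_contract_rel σ v₁ w₁
    (contract_apply_of_ne σ v₁ w₁ (v := ⟨v, hv₁⟩) hw) hu) hrel⟩

end Contract

theorem contract_components_bound_general {D : ℕ} {V W : Type*}
    (σ : Fin D → V ≃ W)
    (hconn : IsConnectedGraph σ)
    (v₁ : V) (w₁ : W) :
    Nat.card (Quotient (reachSetoid (contract σ v₁ w₁))) ≤ D := by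
  have hall : anchoredSet σ v₁ w₁ = Set.univ :=
    hconn.eq_univ_of_mapsTo σ (mapsTo_anchoredSet σ v₁ w₁) (v := v₁) fun h => absurd rfl h
  let anchor : {k : Fin D // (σ k).symm w₁ ≠ v₁} → Quotient (reachSetoid (contract σ v₁ w₁)) :=
    fun k => Quotient.mk _ ⟨(σ k).symm w₁, k.2⟩
  have hsurj : Function.Surjective anchor := by
    rintro ⟨⟨v, hv⟩⟩
    obtain ⟨k, hk, hrel⟩ := (hall ▸ Set.mem_univ v : v ∈ anchoredSet σ v₁ w₁) hv
    exact ⟨⟨k, hk⟩, Quot.sound ((reachSetoid _).symm hrel)⟩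
  calc Nat.card (Quotient (reachSetoid (contract σ v₁ w₁)))
      ≤ Nat.card {k : Fin D // (σ k).symm w₁ ≠ v₁} := Nat.card_le_card_of_surjective _ hsurj
    _ ≤ Nat.card (Fin D) := Finite.card_subtype_le _
    _ = D := Nat.card_fin D

/-- **Statement 18.** The contraction of a connected closed `D`-colored graph with at least
two white vertices has at most `D` connected components. -/
theorem contract_components_bound {D : ℕ} (hD : 1 ≤ D) {V W : Type*}
    [Fintype V] [Fintype W] (σ : Fin D → V ≃ W)
    (hconn : IsConnectedGraph σ) (hV : 2 ≤ Fintype.card V)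
    (hVW : Fintype.card V = Fintype.card W)
    (v₁ : V) (w₁ : W) :
    Nat.card (Quotient (reachSetoid (contract σ v₁ w₁))) ≤ D :=
  contract_components_bound_general σ hconn v₁ w₁
end
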